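/- arXiv:2405.05357 — 4 statements merged into one kernel-verified Lean document; each statement's English description precedes it below -/
import Mathlib

section
/- For every integer n ≥ 1, the total number of runs of descents, summed over all flattened Catalan words of length n, equals (27n − 9 + (5n + 1)·3^n)/36. -/
/-- `w : ℕ → ℕ` encodes a Catalan word of length `n` (0-indexed letters
`w 0, w 1, …, w (n-1)`): the first letter is `0`, each letter is at most the
previous one plus one, and `w` is normalized to vanish at positions `≥ n`. -/
def IsCatalanWord (n : ℕ) (w : ℕ → ℕ) : Prop :=
  w 0 = 0 ∧ (∀ i, i + 1 < n → w (i + 1) ≤ w i + 1) ∧ ∀ i, n ≤ i → w i = 0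

/-- `j` is the starting position of one of the maximal weakly increasing
contiguous subwords (runs of weak ascents) of the length-`n` word `w`. -/
def IsRunStart (n : ℕ) (w : ℕ → ℕ) (j : ℕ) : Prop :=
  j < n ∧ (j = 0 ∨ w j < w (j - 1))

/-- A word is flattened when the leading terms of its maximal weakly increasing
contiguous subwords, read from left to right, form a weakly increasing sequence. -/
def IsFlattened (n : ℕ) (w : ℕ → ℕ) : Prop :=
  ∀ i j, IsRunStart n w i → IsRunStart n w j → i ≤ j → w i ≤ w j

/-- The set of flattened Catalan words of length `n`. -/
def FlatCat (n : ℕ) : Set (ℕ → ℕ) := {w | IsCatalanWord n w ∧ IsFlattened n w}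

/-- Number of maximal strictly increasing contiguous subwords (runs of ascents):
`1 + #{ i : w_i ≥ w_{i+1} }`. -/
noncomputable def runsAsc (n : ℕ) (w : ℕ → ℕ) : ℕ :=
  1 + {i : ℕ | i + 1 < n ∧ w (i + 1) ≤ w i}.ncard

/-- Number of maximal weakly increasing contiguous subwords (runs of weak
ascents): `1 + #{ i : w_i > w_{i+1} }`. -/
noncomputable def wruns (n : ℕ) (w : ℕ → ℕ) : ℕ :=
  1 + {i : ℕ | i + 1 < n ∧ w (i + 1) < w i}.ncard

/-- Number of maximal strictly decreasing contiguous subwords (runs of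
descents): `1 + #{ i : w_i ≤ w_{i+1} }`. -/
noncomputable def runsDesc (n : ℕ) (w : ℕ → ℕ) : ℕ :=
  1 + {i : ℕ | i + 1 < n ∧ w i ≤ w (i + 1)}.ncard

/-- Number of maximal weakly decreasing contiguous subwords (runs of weak
descents): `1 + #{ i : w_i < w_{i+1} }`. -/
noncomputable def wrunsDesc (n : ℕ) (w : ℕ → ℕ) : ℕ :=
  1 + {i : ℕ | i + 1 < n ∧ w i < w (i + 1)}.ncard

/-- An `ℓ`-valley `a b^ℓ (b+1)` (with `a > b`) occurring at position `i` of the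
length-`n` word `w`. -/
def IsLValley (n : ℕ) (w : ℕ → ℕ) (ℓ i : ℕ) : Prop :=
  i + ℓ + 1 < n ∧ w (i + 1) < w i ∧ (∀ t, 1 ≤ t → t ≤ ℓ → w (i + t) = w (i + 1)) ∧
    w (i + ℓ + 1) = w (i + 1) + 1

/-- Number of `ℓ`-valleys of `w`. -/
noncomputable def lValleyCount (n : ℕ) (w : ℕ → ℕ) (ℓ : ℕ) : ℕ :=
  {i : ℕ | IsLValley n w ℓ i}.ncard

/-- Number of valleys of `w` (all `ℓ`-valleys, `ℓ ≥ 1`). -/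
noncomputable def valleyCount (n : ℕ) (w : ℕ → ℕ) : ℕ :=
  {p : ℕ × ℕ | 1 ≤ p.2 ∧ IsLValley n w p.2 p.1}.ncard

/-- A symmetric valley `a (a-1)^ℓ a` (with `ℓ ≥ 1`) occurring at position `i`. -/
def IsSymValley (n : ℕ) (w : ℕ → ℕ) (ℓ i : ℕ) : Prop :=
  i + ℓ + 1 < n ∧ w i = w (i + 1) + 1 ∧ (∀ t, 1 ≤ t → t ≤ ℓ → w (i + t) = w (i + 1)) ∧
    w (i + ℓ + 1) = w i

/-- Number of symmetric valleys of `w` (over all `ℓ ≥ 1`). -/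
noncomputable def symValleyCount (n : ℕ) (w : ℕ → ℕ) : ℕ :=
  {p : ℕ × ℕ | 1 ≤ p.2 ∧ IsSymValley n w p.2 p.1}.ncard

/-- An `ℓ`-peak `a (a+1)^ℓ b` (with `a ≥ b`) occurring at position `i` of the
length-`n` word `w`. -/
def IsLPeak (n : ℕ) (w : ℕ → ℕ) (ℓ i : ℕ) : Prop :=
  i + ℓ + 1 < n ∧ (∀ t, 1 ≤ t → t ≤ ℓ → w (i + t) = w i + 1) ∧ w (i + ℓ + 1) ≤ w i

/-- Number of `ℓ`-peaks of `w`. -/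
noncomputable def lPeakCount (n : ℕ) (w : ℕ → ℕ) (ℓ : ℕ) : ℕ :=
  {i : ℕ | IsLPeak n w ℓ i}.ncard

/-- Number of peaks of `w` (all `ℓ`-peaks, `ℓ ≥ 1`). -/
noncomputable def peakCount (n : ℕ) (w : ℕ → ℕ) : ℕ :=
  {p : ℕ × ℕ | 1 ≤ p.2 ∧ IsLPeak n w p.2 p.1}.ncard

/-- A symmetric peak `a (a+1)^ℓ a` (with `ℓ ≥ 1`) occurring at position `i`. -/
def IsSymPeak (n : ℕ) (w : ℕ → ℕ) (ℓ i : ℕ) : Prop :=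
  i + ℓ + 1 < n ∧ (∀ t, 1 ≤ t → t ≤ ℓ → w (i + t) = w i + 1) ∧ w (i + ℓ + 1) = w i

/-- Number of symmetric peaks of `w` (over all `ℓ ≥ 1`). -/
noncomputable def symPeakCount (n : ℕ) (w : ℕ → ℕ) : ℕ :=
  {p : ℕ × ℕ | 1 ≤ p.2 ∧ IsSymPeak n w p.2 p.1}.ncard

section Aux

lemma catalan_le {n : ℕ} {w : ℕ → ℕ} (h : IsCatalanWord n w) : ∀ i, i < n → w i ≤ i := by
  intro i hi
  induction i with
  | zero => simp [h.1]
  | succ k ih =>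
    have h2 := h.2.1 k hi
    have hk := ih (Nat.lt_of_succ_lt hi)
    omega

lemma flatCat_finite (n : ℕ) : (FlatCat n).Finite := by
  have hsub : FlatCat n ⊆
      (fun f : Fin n → Fin (n + 1) => fun i => if h : i < n then (f ⟨i, h⟩ : ℕ) else 0) ''
        Set.univ := by
    rintro w ⟨hc, _⟩
    refine ⟨fun i => ⟨w i, ?_⟩, trivial, ?_⟩
    · exact lt_of_le_of_lt (catalan_le hc i i.2) (Nat.lt_succ_of_lt i.2)
    · funext i
      by_cases h : i < n
      · simp [h]
      · simp [h, hc.2.2 i (le_of_not_gt h)]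
  exact Set.Finite.subset (Set.Finite.image _ Set.finite_univ) hsub

noncomputable def lastStart (n : ℕ) (w : ℕ → ℕ) : ℕ := sSup {j | IsRunStart n w j}

noncomputable def lrs (n : ℕ) (w : ℕ → ℕ) : ℕ := w (lastStart n w)

lemma runStart_zero {n : ℕ} (w : ℕ → ℕ) (hn : 1 ≤ n) : IsRunStart n w 0 :=
  ⟨hn, Or.inl rfl⟩

lemma runStart_bdd {n : ℕ} (w : ℕ → ℕ) : BddAbove {j | IsRunStart n w j} :=
  ⟨n, fun j hj => le_of_lt hj.1⟩

lemma lastStart_isRunStart {n : ℕ} (w : ℕ → ℕ) (hn : 1 ≤ n) :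
    IsRunStart n w (lastStart n w) := by
  have : lastStart n w ∈ {j | IsRunStart n w j} :=
    Nat.sSup_mem ⟨0, runStart_zero w hn⟩ (runStart_bdd w)
  exact this

lemma le_lastStart {n : ℕ} {w : ℕ → ℕ} {j : ℕ} (hj : IsRunStart n w j) :
    j ≤ lastStart n w :=
 by
  have : j ∈ {j | IsRunStart n w j} := hj
  exact le_csSup (α := ℕ) (s := {j | IsRunStart n w j}) (runStart_bdd w) this

lemma lastStart_lt {n : ℕ} (w : ℕ → ℕ) (hn : 1 ≤ n) : lastStart n w < n :=
  (lastStart_isRunStart w hn).1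

/-- after the last run start the word is weakly increasing -/
lemma mono_after_lastStart {n : ℕ} {w : ℕ → ℕ} {i : ℕ}
    (hls : lastStart n w ≤ i) (hi : i + 1 < n) : w i ≤ w (i + 1) := by
  by_contra hlt
  have : IsRunStart n w (i + 1) := ⟨hi, Or.inr (by simp only [Nat.add_sub_cancel]; omega)⟩
  have := le_lastStart this
  omega

lemma lrs_le_of_ge {n : ℕ} {w : ℕ → ℕ} (hn : 1 ≤ n) :
    ∀ i, lastStart n w ≤ i → i < n → lrs n w ≤ w i := by
  intro i
  induction i with
  | zero => intro h0 _; rw [lrs, Nat.le_zero.mp h0]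
  | succ k ih =>
    intro hk hkn
    rcases Nat.lt_or_ge (lastStart n w) (k + 1) with h | h
    · have h1 : lastStart n w ≤ k := by omega
      exact le_trans (ih h1 (by omega)) (mono_after_lastStart h1 hkn)
    · have : lastStart n w = k + 1 := le_antisymm hk h
      rw [lrs, this]

lemma lrs_le_last {n : ℕ} {w : ℕ → ℕ} (hn : 1 ≤ n) : lrs n w ≤ w (n - 1) :=
  lrs_le_of_ge hn (n - 1) (by have := lastStart_lt w hn; omega) (by omega)

lemma runStart_val_le_lrs {n : ℕ} {w : ℕ → ℕ} (hf : IsFlattened n w) {j : ℕ}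
    (hj : IsRunStart n w j) (hn : 1 ≤ n) : w j ≤ lrs n w :=
  hf j (lastStart n w) hj (lastStart_isRunStart w hn) (le_lastStart hj)

end Aux
section Aux2

open Function

lemma runStart_update_iff {n j x : ℕ} {w : ℕ → ℕ} (hj : j < n) :
    IsRunStart (n + 1) (Function.update w n x) j ↔ IsRunStart n w j := by
  have h1 : Function.update w n x j = w j := Function.update_of_ne (by omega) _ _
  have h2 : Function.update w n x (j - 1) = w (j - 1) := Function.update_of_ne (by omega) _ _
  unfold IsRunStart
  rw [h1, h2]
  omega

lemma runStart_update_n {n x : ℕ} {w : ℕ → ℕ} (hn : 1 ≤ n) :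
    IsRunStart (n + 1) (Function.update w n x) n ↔ x < w (n - 1) := by
  have h1 : Function.update w n x n = x := Function.update_self _ _ _
  have h2 : Function.update w n x (n - 1) = w (n - 1) := Function.update_of_ne (by omega) _ _
  unfold IsRunStart
  rw [h1, h2]
  omega

lemma runStart_longer_iff {n j : ℕ} {w : ℕ → ℕ} (hj : j < n) :
    IsRunStart (n + 1) w j ↔ IsRunStart n w j := by
  unfold IsRunStart; omega

lemma runStart_trunc_iff {n j x : ℕ} {w : ℕ → ℕ} (hj : j < n) :
    IsRunStart n (Function.update w n x) j ↔ IsRunStart (n + 1) w j := by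
  have h1 : Function.update w n x j = w j := Function.update_of_ne (by omega) _ _
  have h2 : Function.update w n x (j - 1) = w (j - 1) := Function.update_of_ne (by omega) _ _
  unfold IsRunStart
  rw [h1, h2]
  omega

lemma ext_mem_iff {n : ℕ} {w : ℕ → ℕ} (hn : 1 ≤ n) (hw : w ∈ FlatCat n) (x : ℕ) :
    Function.update w n x ∈ FlatCat (n + 1) ↔ lrs n w ≤ x ∧ x ≤ w (n - 1) + 1 := by
  obtain ⟨hc, hf⟩ := hw
  have hun : Function.update w n x n = x := Function.update_self _ _ _
  have hult : ∀ i, i < n → Function.update w n x i = w i := fun i hi =>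
    Function.update_of_ne (by omega) _ _
  constructor
  · rintro ⟨hc', hf'⟩
    constructor
    · rcases Nat.lt_or_ge x (w (n - 1)) with hlt | hge
      · -- n is a run start of the extended word
        have hrn : IsRunStart (n + 1) (Function.update w n x) n :=
          (runStart_update_n hn).mpr hlt
        have hrl : IsRunStart (n + 1) (Function.update w n x) (lastStart n w) :=
          (runStart_update_iff (lastStart_lt w hn)).mpr (lastStart_isRunStart w hn)
        have := hf' _ _ hrl hrn (le_of_lt (lastStart_lt w hn))
        rwa [hult _ (lastStart_lt w hn), hun] at this
      · exact le_trans (lrs_le_last hn) hge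
    · have := hc'.2.1 (n - 1) (by omega)
      rw [show n - 1 + 1 = n by omega, hun, hult _ (by omega)] at this
      exact this
  · rintro ⟨hx1, hx2⟩
    constructor
    · refine ⟨?_, ?_, ?_⟩
      · rw [hult 0 hn]; exact hc.1
      · intro i hi
        rcases Nat.lt_or_ge (i + 1) n with h | h
        · rw [hult _ h, hult _ (by omega)]; exact hc.2.1 i h
        · have hin : i + 1 = n := by omega
          rw [hin, hun, show i = n - 1 by omega, hult _ (by omega)]
          exact hx2
      · intro i hi
        rw [Function.update_of_ne (by omega)]
        exact hc.2.2 i (by omega)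
    · intro i j hi hj hij
      rcases Nat.lt_or_ge j n with hjn | hjn
      · have hin : i < n := lt_of_le_of_lt hij hjn
        rw [hult _ hin, hult _ hjn]
        exact hf i j ((runStart_update_iff hin).mp hi) ((runStart_update_iff hjn).mp hj) hij
      · have hjn' : j = n := by have := hj.1; omega
        rw [hjn', hun]
        rcases Nat.lt_or_ge i n with hin | hin
        · rw [hult _ hin]
          have hri : IsRunStart n w i := (runStart_update_iff hin).mp hi
          exact le_trans (runStart_val_le_lrs hf hri hn) hx1
        · have hieq : i = n := by omega
          rw [hieq, hun]

lemma trunc_mem {n : ℕ} {w : ℕ → ℕ} (hn : 1 ≤ n) (hw : w ∈ FlatCat (n + 1)) :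
    Function.update w n 0 ∈ FlatCat n := by
  obtain ⟨hc, hf⟩ := hw
  have hult : ∀ i, i < n → Function.update w n 0 i = w i := fun i hi =>
    Function.update_of_ne (by omega) _ _
  constructor
  · refine ⟨?_, ?_, ?_⟩
    · rw [hult 0 hn]; exact hc.1
    · intro i hi
      rw [hult _ hi, hult _ (by omega)]
      exact hc.2.1 i (by omega)
    · intro i hi
      rcases eq_or_lt_of_le hi with h | h
      · rw [← h, Function.update_self]
      · rw [Function.update_of_ne (by omega)]
        exact hc.2.2 i (by omega)
  · intro i j hi hj hij
    have hin : i < n := lt_of_le_of_lt hij hj.1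
    have hjn : j < n := hj.1
    rw [hult _ hin, hult _ hjn]
    exact hf i j ((runStart_trunc_iff hin).mp hi) ((runStart_trunc_iff hjn).mp hj) hij

end Aux2
section Aux3

noncomputable def FC (n : ℕ) : Finset (ℕ → ℕ) := (flatCat_finite n).toFinset

lemma mem_FC {n : ℕ} {w : ℕ → ℕ} : w ∈ FC n ↔ w ∈ FlatCat n := Set.Finite.mem_toFinset _

lemma update_update_self {n : ℕ} (w : ℕ → ℕ) :
    Function.update (Function.update w n 0) n (w n) = w := by
  rw [Function.update_idem, Function.update_eq_self]

lemma sum_ext {n : ℕ} (hn : 1 ≤ n) (F : (ℕ → ℕ) → ℚ) :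
    ∑ w' ∈ FC (n + 1), F w' =
      ∑ w ∈ FC n, ∑ x ∈ Finset.Icc (lrs n w) (w (n - 1) + 1), F (Function.update w n x) := by
  rw [← Finset.sum_sigma (FC n) (fun w => Finset.Icc (lrs n w) (w (n - 1) + 1))
    (fun p => F (Function.update p.1 n p.2))]
  refine Finset.sum_nbij' (i := fun w' => (⟨Function.update w' n 0, w' n⟩ : (_ : ℕ → ℕ) × ℕ))
    (j := fun p => Function.update p.1 n p.2) ?_ ?_ ?_ ?_ ?_
  · intro w' hw'
    rw [mem_FC] at hw'
    have htr : Function.update w' n 0 ∈ FlatCat n := trunc_mem hn hw'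
    rw [Finset.mem_sigma, mem_FC]
    refine ⟨htr, ?_⟩
    have := (ext_mem_iff hn htr (w' n)).mp (by rw [update_update_self]; exact hw')
    rw [Finset.mem_Icc]
    exact this
  · intro p hp
    rw [Finset.mem_sigma, mem_FC, Finset.mem_Icc] at hp
    rw [mem_FC]
    exact (ext_mem_iff hn hp.1 p.2).mpr hp.2
  · intro w' hw'
    exact update_update_self w'
  · intro p hp
    rw [Finset.mem_sigma, mem_FC] at hp
    have hp0 : p.1 n = 0 := hp.1.1.2.2 n (le_refl n)
    refine Sigma.ext ?_ (heq_of_eq ?_)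
    · show Function.update (Function.update p.1 n p.2) n 0 = p.1
      rw [Function.update_idem, ← hp0, Function.update_eq_self]
    · show Function.update p.1 n p.2 n = p.2
      exact Function.update_self _ _ _
  · intro w' hw'
    rw [update_update_self]

noncomputable def dct (n : ℕ) (w : ℕ → ℕ) : ℕ := {i | i + 1 < n ∧ w (i + 1) < w i}.ncard

noncomputable def hst (n : ℕ) (w : ℕ → ℕ) : ℕ := w (n - 1) - lrs n w

lemma dset_finite (n : ℕ) (P : ℕ → Prop) : {i | i + 1 < n ∧ P i}.Finite :=
  (Set.finite_Iio n).subset (fun i hi => Nat.lt_of_succ_lt hi.1)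

lemma dct_ext {n x : ℕ} {w : ℕ → ℕ} (hn : 1 ≤ n) :
    dct (n + 1) (Function.update w n x) = dct n w + (if x < w (n - 1) then 1 else 0) := by
  have hv : ∀ i, i + 1 < n →
      (Function.update w n x (i + 1) < Function.update w n x i ↔ w (i + 1) < w i) := by
    intro i hi
    rw [Function.update_of_ne (by omega), Function.update_of_ne (by omega)]
  have hvn : Function.update w n x n = x := Function.update_self _ _ _
  have hvn1 : Function.update w n x (n - 1) = w (n - 1) := Function.update_of_ne (by omega) _ _
  by_cases hx : x < w (n - 1)
  · have hset : {i | i + 1 < n + 1 ∧ Function.update w n x (i + 1) < Function.update w n x i}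
        = insert (n - 1) {i | i + 1 < n ∧ w (i + 1) < w i} := by
      ext i
      simp only [Set.mem_insert_iff, Set.mem_setOf_eq]
      rcases Nat.lt_trichotomy (i + 1) n with h | h | h
      · rw [hv i h]; omega
      · have : i = n - 1 := by omega
        subst this
        rw [show n - 1 + 1 = n by omega, hvn, hvn1]
        omega
      · constructor
        · intro hh; exact absurd hh.1 (by omega)
        · rintro (h' | h')
          · omega
          · exact absurd h'.1 (by omega)
    rw [dct, hset, Set.ncard_insert_of_notMem (by simp only [Set.mem_setOf_eq]; omega)
      (dset_finite n _), if_pos hx, dct]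
  · have hset : {i | i + 1 < n + 1 ∧ Function.update w n x (i + 1) < Function.update w n x i}
        = {i | i + 1 < n ∧ w (i + 1) < w i} := by
      ext i
      simp only [Set.mem_setOf_eq]
      rcases Nat.lt_trichotomy (i + 1) n with h | h | h
      · rw [hv i h]; omega
      · have : i = n - 1 := by omega
        subst this
        rw [show n - 1 + 1 = n by omega, hvn, hvn1]
        omega
      · constructor
        · intro hh; exact absurd hh.1 (by omega)
        · intro hh; exact absurd hh.1 (by omega)
    rw [dct, hset, if_neg hx, dct, Nat.add_zero]

lemma lastStart_ext {n x : ℕ} {w : ℕ → ℕ} (hn : 1 ≤ n) :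
    lastStart (n + 1) (Function.update w n x) = if x < w (n - 1) then n else lastStart n w := by
  by_cases hx : x < w (n - 1)
  · rw [if_pos hx]
    have hmem : IsRunStart (n + 1) (Function.update w n x) n := (runStart_update_n hn).mpr hx
    refine le_antisymm ?_ (le_lastStart hmem)
    have hne : {j | IsRunStart (n + 1) (Function.update w n x) j}.Nonempty := ⟨n, hmem⟩
    rw [lastStart]
    refine csSup_le hne ?_
    intro j hj
    exact Nat.lt_succ_iff.mp hj.1
  · rw [if_neg hx]
    have hset : {j | IsRunStart (n + 1) (Function.update w n x) j} = {j | IsRunStart n w j} := by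
      ext j
      simp only [Set.mem_setOf_eq]
      rcases Nat.lt_trichotomy j n with h | h | h
      · exact runStart_update_iff h
      · subst h
        rw [runStart_update_n hn]
        constructor
        · intro h'; exact absurd h' hx
        · intro h'; exact absurd h'.1 (lt_irrefl j)
      · constructor
        · intro h'; exact absurd h'.1 (by omega)
        · intro h'; exact absurd h'.1 (by omega)
    unfold lastStart
    rw [hset]

lemma lrs_ext {n x : ℕ} {w : ℕ → ℕ} (hn : 1 ≤ n) :
    lrs (n + 1) (Function.update w n x) = if x < w (n - 1) then x else lrs n w := by
  rw [lrs, lastStart_ext hn]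
  by_cases hx : x < w (n - 1)
  · rw [if_pos hx, if_pos hx, Function.update_self]
  · rw [if_neg hx, if_neg hx, Function.update_of_ne (by have := lastStart_lt w hn; omega), lrs]

lemma hst_ext {n x : ℕ} {w : ℕ → ℕ} (hn : 1 ≤ n) :
    hst (n + 1) (Function.update w n x) = if x < w (n - 1) then 0 else x - lrs n w := by
  rw [hst, Nat.add_sub_cancel, Function.update_self, lrs_ext hn]
  by_cases hx : x < w (n - 1)
  · rw [if_pos hx, if_pos hx, Nat.sub_self]
  · rw [if_neg hx, if_neg hx]

end Aux3
section Aux4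

lemma mySumIcc (a b : ℕ) (hab : a ≤ b) (f : ℕ → ℚ) :
    ∑ x ∈ Finset.Icc a (b + 1), f x = f (b + 1) + f b + ∑ x ∈ Finset.Ico a b, f x := by
  have h1 : Finset.Icc a (b + 1) = insert (b + 1) (insert b (Finset.Ico a b)) := by
    ext y
    simp only [Finset.mem_Icc, Finset.mem_insert, Finset.mem_Ico]
    omega
  rw [h1, Finset.sum_insert (by simp only [Finset.mem_insert, Finset.mem_Ico]; omega),
    Finset.sum_insert (by simp only [Finset.mem_Ico]; omega)]
  ring

lemma inner_eval {n : ℕ} {w : ℕ → ℕ} (hn : 1 ≤ n) (hw : w ∈ FlatCat n) (G : ℕ → ℕ → ℚ) :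
    ∑ x ∈ Finset.Icc (lrs n w) (w (n - 1) + 1),
        G (dct (n + 1) (Function.update w n x)) (hst (n + 1) (Function.update w n x))
      = G (dct n w) (hst n w) + G (dct n w) (hst n w + 1)
        + (hst n w : ℚ) * G (dct n w + 1) 0 := by
  have hab : lrs n w ≤ w (n - 1) := lrs_le_last hn
  rw [mySumIcc _ _ hab]
  have h3 : ∑ x ∈ Finset.Ico (lrs n w) (w (n - 1)),
      G (dct (n + 1) (Function.update w n x)) (hst (n + 1) (Function.update w n x))
      = (hst n w : ℚ) * G (dct n w + 1) 0 := by
    have hcg : ∀ x ∈ Finset.Ico (lrs n w) (w (n - 1)),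
        G (dct (n + 1) (Function.update w n x)) (hst (n + 1) (Function.update w n x))
          = G (dct n w + 1) 0 := by
      intro x hx
      rw [Finset.mem_Ico] at hx
      rw [dct_ext hn, hst_ext hn, if_pos hx.2, if_pos hx.2]
    rw [Finset.sum_congr rfl hcg, Finset.sum_const, Nat.card_Ico, nsmul_eq_mul]
    congr 1
  rw [h3, dct_ext hn, dct_ext hn, hst_ext hn, hst_ext hn,
    if_neg (by omega : ¬ w (n - 1) + 1 < w (n - 1)), if_neg (lt_irrefl (w (n - 1))),
    if_neg (by omega : ¬ w (n - 1) + 1 < w (n - 1)), if_neg (lt_irrefl (w (n - 1)))]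
  have e1 : w (n - 1) + 1 - lrs n w = hst n w + 1 := by rw [hst]; omega
  have e2 : w (n - 1) - lrs n w = hst n w := rfl
  rw [e1, e2, Nat.add_zero]
  ring

lemma master {n : ℕ} (hn : 1 ≤ n) (G : ℕ → ℕ → ℚ) :
    ∑ w' ∈ FC (n + 1), G (dct (n + 1) w') (hst (n + 1) w')
      = ∑ w ∈ FC n, (G (dct n w) (hst n w) + G (dct n w) (hst n w + 1)
          + (hst n w : ℚ) * G (dct n w + 1) 0) := by
  rw [sum_ext hn (fun w' => G (dct (n + 1) w') (hst (n + 1) w'))]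
  exact Finset.sum_congr rfl (fun w hw => inner_eval hn (mem_FC.mp hw) G)

noncomputable def Sc (n : ℕ) : ℚ := ∑ _w ∈ FC n, 1
noncomputable def Sg (n : ℕ) : ℚ := ∑ w ∈ FC n, (hst n w : ℚ)
noncomputable def Sd (n : ℕ) : ℚ := ∑ w ∈ FC n, (dct n w : ℚ)
noncomputable def Se (n : ℕ) : ℚ := ∑ w ∈ FC n, (dct n w : ℚ) * (hst n w : ℚ)

lemma recSc {n : ℕ} (hn : 1 ≤ n) : Sc (n + 1) = 2 * Sc n + Sg n := by
  rw [Sc, master hn (fun _ _ => 1), Sc, Sg, Finset.mul_sum, ← Finset.sum_add_distrib]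
  exact Finset.sum_congr rfl (fun w hw => by push_cast; ring)

lemma recSg {n : ℕ} (hn : 1 ≤ n) : Sg (n + 1) = 2 * Sg n + Sc n := by
  rw [Sg, master hn (fun _ h => (h : ℚ)), Sg, Sc, Finset.mul_sum, ← Finset.sum_add_distrib]
  exact Finset.sum_congr rfl (fun w hw => by push_cast; ring)

lemma recSd {n : ℕ} (hn : 1 ≤ n) : Sd (n + 1) = 2 * Sd n + Se n + Sg n := by
  rw [Sd, master hn (fun d _ => (d : ℚ)), Sd, Se, Sg, Finset.mul_sum,
    ← Finset.sum_add_distrib, ← Finset.sum_add_distrib]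
  exact Finset.sum_congr rfl (fun w hw => by push_cast; ring)

lemma recSe {n : ℕ} (hn : 1 ≤ n) : Se (n + 1) = 2 * Se n + Sd n := by
  rw [Se, master hn (fun d h => (d : ℚ) * (h : ℚ)), Se, Sd, Finset.mul_sum,
    ← Finset.sum_add_distrib]
  exact Finset.sum_congr rfl (fun w hw => by push_cast; ring)

lemma flatCat_one : FlatCat 1 = {fun _ => 0} := by
  ext w
  simp only [Set.mem_singleton_iff, FlatCat, Set.mem_setOf_eq]
  constructor
  · rintro ⟨⟨h0, _, hz⟩, _⟩
    funext i
    cases i with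
    | zero => exact h0
    | succ k => exact hz _ (by omega)
  · rintro rfl
    exact ⟨⟨rfl, fun i hi => by omega, fun i _ => rfl⟩, fun i j _ _ _ => le_refl _⟩

lemma FC_one : FC 1 = {fun _ => 0} := by
  ext w
  rw [mem_FC, flatCat_one, Finset.mem_singleton, Set.mem_singleton_iff]

lemma dct_one (w : ℕ → ℕ) : dct 1 w = 0 := by
  rw [dct]
  convert Set.ncard_empty ℕ
  ext i
  simp only [Set.mem_setOf_eq, Set.mem_empty_iff_false, iff_false]
  omega

lemma hst_zero_word : hst 1 (fun _ => 0) = 0 := by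
  rw [hst]
  omega

lemma closed (n : ℕ) (hn : 1 ≤ n) :
    Sc n = (3 ^ (n - 1) + 1) / 2 ∧ Sg n = (3 ^ (n - 1) - 1) / 2 ∧
      Sd n = (((n : ℚ) - 1) * 3 ^ (n - 1) + 3 - 3 * n) / 12 ∧
      Se n = (((n : ℚ) - 4) * 3 ^ (n - 1) + 3 * n) / 12 := by
  induction n, hn using Nat.le_induction with
  | base =>
    rw [Sc, Sg, Sd, Se, FC_one]
    simp only [Finset.sum_singleton, dct_one, hst_zero_word]
    norm_num
  | succ n hn ih =>
    obtain ⟨hc, hg, hd, he⟩ := ih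
    have h2 : n - 1 + 1 = n := by omega
    have hp : (3 : ℚ) ^ (n + 1 - 1) = 3 * 3 ^ (n - 1) := by
      rw [Nat.add_sub_cancel]
      conv_lhs => rw [← h2]
      rw [pow_succ]
      ring
    rw [recSc hn, recSg hn, recSd hn, recSe hn, hc, hg, hd, he, hp]
    push_cast
    exact ⟨by ring, by ring, by ring, by ring⟩

lemma runsDesc_add_dct {n : ℕ} (hn : 1 ≤ n) (w : ℕ → ℕ) :
    runsDesc n w + dct n w = n := by
  have hA := dset_finite n (fun i => w i ≤ w (i + 1))
  have hD := dset_finite n (fun i => w (i + 1) < w i)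
  have hU : {i | i + 1 < n ∧ w i ≤ w (i + 1)} ∪ {i | i + 1 < n ∧ w (i + 1) < w i}
      = {i | i + 1 < n} := by
    ext i
    simp only [Set.mem_union, Set.mem_setOf_eq]
    omega
  have hdisj : Disjoint {i | i + 1 < n ∧ w i ≤ w (i + 1)} {i | i + 1 < n ∧ w (i + 1) < w i} :=
    Set.disjoint_left.mpr (fun i hi hi2 => by
      have h1 := hi.2
      have h2 := hi2.2
      omega)
  have hcard : {i | i + 1 < n}.ncard = n - 1 := by
    have hself : {i | i + 1 < n} = ↑(Finset.range (n - 1)) := by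
      ext i
      simp only [Set.mem_setOf_eq, Finset.coe_range, Set.mem_Iio]
      omega
    rw [hself, Set.ncard_coe_finset, Finset.card_range]
  have hun := Set.ncard_union_eq hdisj hA hD
  rw [hU, hcard] at hun
  rw [runsDesc, dct]
  omega

end Aux4
/-- For every `n ≥ 1`, the total number of runs of descents over all flattened
Catalan words of length `n` equals `(27n - 9 + (5n + 1)·3^n)/36`. -/
theorem flatCat_total_runsDesc (n : ℕ) (hn : 1 ≤ n) :
    ((∑ᶠ w ∈ FlatCat n, runsDesc n w : ℕ) : ℚ) =
      (27 * (n : ℚ) - 9 + (5 * (n : ℚ) + 1) * 3 ^ n) / 36 := by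
  have hset : FlatCat n = ↑(FC n) := (Set.Finite.coe_toFinset _).symm
  rw [hset, finsum_mem_coe_finset, Nat.cast_sum]
  have hpw : ∀ w ∈ FC n, ((runsDesc n w : ℕ) : ℚ) = (n : ℚ) - (dct n w : ℚ) := by
    intro w _
    have h2 := congrArg (Nat.cast : ℕ → ℚ) (runsDesc_add_dct hn w)
    push_cast at h2
    linarith
  rw [Finset.sum_congr rfl hpw, Finset.sum_sub_distrib]
  have hSd : ∑ w ∈ FC n, ((dct n w : ℕ) : ℚ) = Sd n := rfl
  have hSc : ∑ _w ∈ FC n, (n : ℚ) = (n : ℚ) * Sc n := by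
    rw [Sc, Finset.mul_sum]
    exact Finset.sum_congr rfl (fun w _ => by ring)
  rw [hSd, hSc]
  obtain ⟨hc, _, hd, _⟩ := closed n hn
  rw [hc, hd]
  have h3 : (3 : ℚ) ^ n = 3 * 3 ^ (n - 1) := by
    have h2 : n - 1 + 1 = n := by omega
    conv_lhs => rw [← h2]
    rw [pow_succ]
    ring
  rw [h3]
  ring
end

section
/- For all integers n, k ≥ 1, the number of flattened Catalan words of length n with exactly k runs of weak descents equals the number of flattened Catalan words of length n with exactly k runs of ascents. -/
theorem Set.ncard_sep_eq_of_involution {α β : Type*} {S : Set α} {φ : α → α} {f g : α → β}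
    (hmaps : Set.MapsTo φ S S) (hinv : ∀ x ∈ S, φ (φ x) = x) (hfg : ∀ x ∈ S, g (φ x) = f x)
    (k : β) : {x ∈ S | f x = k}.ncard = {x ∈ S | g x = k}.ncard := by
  refine Set.ncard_congr (fun x _ => φ x) (fun x ⟨hx, hfx⟩ => ⟨hmaps hx, (hfg x hx).trans hfx⟩)
    (fun x y hx hy hxy => by rw [← hinv x hx.1, hxy, hinv y hy.1]) fun y ⟨hy, hgy⟩ => ?_
  refine ⟨φ y, ⟨hmaps hy, ?_⟩, hinv y hy⟩
  rw [← hfg _ (hmaps hy), hinv y hy, hgy]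

namespace FlatCat

open Finset

def ascentCount (n : ℕ) (w : ℕ → ℕ) : ℕ :=
  #{i ∈ range (n - 1) | w i < w (i + 1)}

theorem ascentCount_le (n : ℕ) (w : ℕ → ℕ) : ascentCount n w ≤ n - 1 :=
  (card_filter_le _ _).trans (card_range _).le

theorem wrunsDesc_eq (n : ℕ) (w : ℕ → ℕ) : wrunsDesc n w = 1 + ascentCount n w := by
  have : {i : ℕ | i + 1 < n ∧ w i < w (i + 1)} = ↑{i ∈ range (n - 1) | w i < w (i + 1)} := by
    ext i
    simp only [Set.mem_ofPred_eq, coe_filter, mem_range]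
    omega
  rw [wrunsDesc, this, Set.ncard_coe_finset, ascentCount]

theorem runsAsc_eq (n : ℕ) (w : ℕ → ℕ) : runsAsc n w = 1 + (n - 1 - ascentCount n w) := by
  have : {i : ℕ | i + 1 < n ∧ w (i + 1) ≤ w i} = ↑{i ∈ range (n - 1) | ¬ w i < w (i + 1)} := by
    ext i
    simp only [Set.mem_ofPred_eq, coe_filter, mem_range]
    omega
  have hsplit := card_filter_add_card_filter_not (s := range (n - 1)) (fun i => w i < w (i + 1))
  rw [card_range] at hsplit
  rw [runsAsc, this, Set.ncard_coe_finset, ascentCount]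
  omega

def IsStepRun (p : ℕ) (w : ℕ → ℕ) : Prop :=
  w 0 = 0 ∧ ∀ j < p, w (j + 1) = w j ∨ w (j + 1) = w j + 1

/-- The run `w` with its steps `0` and `+1` exchanged, except an ascent at `s`, which is kept. -/
def flipRun (s : ℕ) (w : ℕ → ℕ) (i : ℕ) : ℕ :=
  i - w i + if s < i then 1 else 0

/-- In a run `w 0, …, w p` climbing above `c`, the position of its ascent from `c` to `c + 1`. -/
def mark (p c : ℕ) (w : ℕ → ℕ) : ℕ :=
  Nat.findGreatest (fun j => w j ≤ c) p

namespace IsStepRun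

variable {p s c : ℕ} {v w : ℕ → ℕ}

theorem congr (h : IsStepRun p w) (hv : ∀ i ≤ p, v i = w i) : IsStepRun p v :=
  ⟨(hv 0 (Nat.zero_le p)).trans h.1, fun j hj => by
    rw [hv j hj.le, hv (j + 1) hj]; exact h.2 j hj⟩

theorem of_le {q : ℕ} (h : IsStepRun p w) (hq : q ≤ p) : IsStepRun q w :=
  ⟨h.1, fun j hj => h.2 j (by omega)⟩

theorem le_and_le_add (h : IsStepRun p w) {i j : ℕ} (hij : i ≤ j) (hj : j ≤ p) :
    w i ≤ w j ∧ w j ≤ w i + (j - i) := by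
  induction j, hij using Nat.le_induction with
  | base => simp
  | succ j hij ih =>
    have := h.2 j (by omega)
    have := ih (by omega)
    omega

theorem le_self (h : IsStepRun p w) {i : ℕ} (hi : i ≤ p) : w i ≤ i := by
  have := (h.le_and_le_add (Nat.zero_le i) hi).2
  rw [h.1] at this
  omega

theorem card_ascents (h : IsStepRun p w) {m : ℕ} (hm : m ≤ p) :
    #{i ∈ range m | w i < w (i + 1)} = w m := by
  induction m with
  | zero => simp [h.1]
  | succ m ih =>
    rw [range_add_one, filter_insert]
    rcases h.2 m (by omega) with e | e
    · rw [if_neg (by omega), ih (by omega), e]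
    · rw [if_pos (by omega), card_insert_of_notMem (by simp), ih (by omega), e]

theorem flipRun (h : IsStepRun p w) (hs : s < p → w (s + 1) = w s + 1) :
    IsStepRun p (flipRun s w) := by
  refine ⟨by simp [FlatCat.flipRun], fun j hj => ?_⟩
  have := h.2 j hj
  have := h.le_self hj.le
  have := h.le_self hj
  unfold FlatCat.flipRun
  by_cases hsj : s = j
  · have := hs (hsj ▸ hj)
    subst hsj
    split_ifs <;> omega
  · split_ifs <;> omega

theorem flipRun_flipRun (h : IsStepRun p w) (hs : s < p → w (s + 1) = w s + 1) {i : ℕ}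
    (hi : i ≤ p) : FlatCat.flipRun s (FlatCat.flipRun s w) i = w i := by
  have := h.le_self hi
  unfold FlatCat.flipRun
  split_ifs with hsi
  · have := (h.le_and_le_add (show s + 1 ≤ i by omega) hi).1
    have := hs (by omega)
    omega
  · omega

theorem mark_spec (h : IsStepRun p w) (hc : c < w p) :
    mark p c w < p ∧ w (mark p c w) = c ∧ w (mark p c w + 1) = c + 1 := by
  have hle : w (mark p c w) ≤ c :=
    Nat.findGreatest_spec (P := fun j => w j ≤ c) (Nat.zero_le p) (by simp [h.1])
  have hlt : mark p c w < p :=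
    lt_of_le_of_ne (Nat.findGreatest_le p) fun he => by rw [he] at hle; omega
  have hgt : ¬ w (mark p c w + 1) ≤ c :=
    Nat.findGreatest_is_greatest (P := fun j => w j ≤ c) (Nat.lt_succ_self _) hlt
  have := h.2 _ hlt
  exact ⟨hlt, by omega, by omega⟩

theorem mark_sub_lt_flipRun (h : IsStepRun p w) (hc : c < w p) :
    mark p c w - c < FlatCat.flipRun (mark p c w) w p := by
  obtain ⟨hlt, hs, -⟩ := h.mark_spec hc
  have := (h.le_and_le_add hlt.le le_rfl).2
  have := h.le_self hlt.le
  unfold FlatCat.flipRun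
  rw [if_pos hlt]
  omega

theorem mark_eq_of_eqOn_flipRun (h : IsStepRun p w) (hc : c < w p)
    (hv : ∀ i ≤ p, v i = FlatCat.flipRun (mark p c w) w i) :
    mark p (mark p c w - c) v = mark p c w := by
  obtain ⟨hlt, hs, hs1⟩ := h.mark_spec hc
  refine Nat.findGreatest_eq_iff.2 ⟨hlt.le, fun _ => ?_, fun j hsj hj => ?_⟩
  · rw [hv _ hlt.le, FlatCat.flipRun, if_neg (lt_irrefl _), hs]
    omega
  · have := (h.le_and_le_add (show mark p c w + 1 ≤ j by omega) hj).2
    rw [hv j hj, FlatCat.flipRun, if_pos hsj]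
    omega

end IsStepRun

def runEnd (n : ℕ) (w : ℕ → ℕ) : ℕ :=
  Nat.find (⟨n, .inl n.le_succ⟩ : ∃ j, n ≤ j + 1 ∨ w (j + 1) < w j)

def suffix (n p c : ℕ) (w : ℕ → ℕ) (i : ℕ) : ℕ :=
  if i < n - (p + 1) then w (i + (p + 1)) - c else 0

section RunEnd

variable {n p : ℕ} {w : ℕ → ℕ}

theorem runEnd_spec (n : ℕ) (w : ℕ → ℕ) :
    n ≤ runEnd n w + 1 ∨ w (runEnd n w + 1) < w (runEnd n w) :=
  Nat.find_spec (⟨n, .inl n.le_succ⟩ : ∃ j, n ≤ j + 1 ∨ w (j + 1) < w j)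

theorem lt_and_le_of_lt_runEnd {j : ℕ} (hj : j < runEnd n w) : j + 1 < n ∧ w j ≤ w (j + 1) := by
  have := Nat.find_min _ hj
  omega

theorem runEnd_eq (hrun : ∀ j < p, j + 1 < n ∧ w j ≤ w (j + 1))
    (hend : n ≤ p + 1 ∨ w (p + 1) < w p) : runEnd n w = p :=
  (Nat.find_eq_iff _).2 ⟨hend, fun j hj => by have := hrun j hj; omega⟩

theorem isStepRun_runEnd (hw : IsCatalanWord n w) : IsStepRun (runEnd n w) w :=
  ⟨hw.1, fun j hj => by
    have := lt_and_le_of_lt_runEnd hj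
    have := hw.2.1 j this.1
    omega⟩

theorem isStepRun_of_le_runEnd (hw : IsCatalanWord n w) (h : n ≤ runEnd n w + 1) :
    IsStepRun (n - 1) w :=
  (isStepRun_runEnd hw).of_le (by omega)

theorem le_runEnd_of_isStepRun (h : IsStepRun (n - 1) w) : n ≤ runEnd n w + 1 := by
  by_contra hlt
  have := h.2 (runEnd n w) (by omega)
  have := runEnd_spec n w
  omega

theorem mem_of_isStepRun (h : IsStepRun (n - 1) w) (hw : ∀ i, n ≤ i → w i = 0) :
    w ∈ FlatCat n := by
  refine ⟨⟨h.1, fun i hi => ?_, hw⟩, fun i j hi _ _ => ?_⟩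
  · have := h.2 i (by omega)
    omega
  · obtain ⟨hin, rfl | hdesc⟩ := hi
    · rw [h.1]
      exact Nat.zero_le _
    · have hi0 : i ≠ 0 := by rintro rfl; exact lt_irrefl _ hdesc
      have := h.2 (i - 1) (by omega)
      rw [Nat.sub_add_cancel (by omega)] at this
      omega

theorem ascentCount_of_isStepRun (h : IsStepRun (n - 1) w) : ascentCount n w = w (n - 1) :=
  h.card_ascents le_rfl

end RunEnd

structure IsRunThen (n p c : ℕ) (w u : ℕ → ℕ) : Prop where
  run : IsStepRun p w
  lt_length : p + 1 < n
  lt_last : c < w p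
  head : u 0 = 0
  tail : ∀ i, p < i → i < n → w i = u (i - (p + 1)) + c
  vanish : ∀ i, n ≤ i → w i = 0
  vanish_tail : ∀ i, n - (p + 1) ≤ i → u i = 0

namespace IsRunThen

variable {n p c : ℕ} {w u : ℕ → ℕ}

theorem apply_succ (h : IsRunThen n p c w u) : w (p + 1) = c := by
  rw [h.tail _ (by omega) h.lt_length, Nat.sub_self, h.head, zero_add]

theorem runEnd_eq (h : IsRunThen n p c w u) : runEnd n w = p :=
  FlatCat.runEnd_eq (fun j hj => ⟨by have := h.lt_length; omega,
    (h.run.le_and_le_add (Nat.le_succ j) hj).1⟩) (.inr (h.apply_succ ▸ h.lt_last))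

theorem suffix_eq (h : IsRunThen n p c w u) : suffix n p c w = u := by
  funext i
  unfold suffix
  split_ifs with hi
  · rw [h.tail _ (by omega) (by omega)]
    simp
  · exact (h.vanish_tail i (by omega)).symm

theorem isRunStart_iff (h : IsRunThen n p c w u) {i : ℕ} (hi : p < i) :
    IsRunStart n w i ↔ IsRunStart (n - (p + 1)) u (i - (p + 1)) := by
  unfold IsRunStart
  rcases (show i = p + 1 ∨ p + 1 < i by omega) with rfl | hi'
  · have := h.apply_succ ▸ h.lt_last
    have := h.lt_length
    simp only [Nat.sub_self, true_or, and_true, Nat.add_sub_cancel]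
    omega
  · by_cases hin : i < n
    · rw [h.tail i hi hin, h.tail (i - 1) (by omega) (by omega),
        show i - 1 - (p + 1) = i - (p + 1) - 1 by omega]
      omega
    · omega

theorem eq_zero_or_lt_of_isRunStart (h : IsRunThen n p c w u) {i : ℕ} (hi : IsRunStart n w i) :
    i = 0 ∨ p < i := by
  obtain ⟨-, rfl | hdesc⟩ := hi
  · exact .inl rfl
  · by_contra! hip
    have := (h.run.le_and_le_add (Nat.sub_le i 1) hip.2).1
    omega

theorem mem_iff (h : IsRunThen n p c w u) : w ∈ FlatCat n ↔ u ∈ FlatCat (n - (p + 1)) := by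
  have hlen := h.lt_length
  have tail' : ∀ j, j < n - (p + 1) → w (j + (p + 1)) = u j + c := fun j hj => by
    rw [h.tail _ (by omega) (by omega), Nat.add_sub_cancel]
  constructor
  · rintro ⟨⟨-, hstep, -⟩, hflat⟩
    refine ⟨⟨h.head, fun j hj => ?_, h.vanish_tail⟩, fun i j hi hj hij => ?_⟩
    · have := hstep (j + (p + 1)) (by omega)
      rw [show j + (p + 1) + 1 = j + 1 + (p + 1) by omega, tail' j (by omega),
        tail' (j + 1) hj] at this
      omega
    · rw [← Nat.add_sub_cancel i (p + 1), ← h.isRunStart_iff (by omega)] at hi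
      rw [← Nat.add_sub_cancel j (p + 1), ← h.isRunStart_iff (by omega)] at hj
      have := hflat _ _ hi hj (by omega)
      rw [tail' i (by have := hi.1; omega), tail' j (by have := hj.1; omega)] at this
      omega
  · rintro ⟨⟨-, hstep, -⟩, hflat⟩
    refine ⟨⟨h.run.1, fun j hj => ?_, h.vanish⟩, fun i j hi hj hij => ?_⟩
    · rcases lt_trichotomy j p with hjp | rfl | hjp
      · have := h.run.2 j hjp
        omega
      · have := h.apply_succ
        have := h.lt_last
        omega
      · have := hstep (j - (p + 1)) (by omega)
        rw [h.tail j hjp (by omega), h.tail (j + 1) (by omega) hj,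
          show j + 1 - (p + 1) = j - (p + 1) + 1 by omega]
        omega
    · rcases h.eq_zero_or_lt_of_isRunStart hi with rfl | hpi
      · rw [h.run.1]
        exact Nat.zero_le _
      · have := hflat _ _ ((h.isRunStart_iff hpi).1 hi)
          ((h.isRunStart_iff (by omega)).1 hj) (by omega)
        rw [h.tail i hpi hi.1, h.tail j (by omega) hj.1]
        omega

theorem ascentCount_eq (h : IsRunThen n p c w u) :
    ascentCount n w = w p + ascentCount (n - (p + 1)) u := by
  have hlen := h.lt_length
  have hsucc := h.apply_succ
  have hlast := h.lt_last
  unfold ascentCount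
  rw [card_filter, card_filter, show n - 1 = p + 1 + (n - (p + 1) - 1) by omega, sum_range_add,
    sum_range_succ, ← card_filter, h.run.card_ascents le_rfl, if_neg (by omega), add_zero]
  congr 1
  refine sum_congr rfl fun j hj => ?_
  rw [mem_range] at hj
  rw [h.tail _ (by omega) (by omega), h.tail _ (by omega) (by omega),
    show p + 1 + j - (p + 1) = j by omega, show p + 1 + j + 1 - (p + 1) = j + 1 by omega]
  simp only [add_lt_add_iff_right]

end IsRunThen

section Decomposition

variable {n : ℕ} {w : ℕ → ℕ}

theorem apply_runEnd_succ_le (hw : w ∈ FlatCat n) (h : runEnd n w + 1 < n) {i : ℕ}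
    (hi : runEnd n w < i) (hin : i < n) : w (runEnd n w + 1) ≤ w i := by
  have hdesc := (runEnd_spec n w).resolve_left (by omega)
  induction i, (show runEnd n w + 1 ≤ i from hi) using Nat.le_induction with
  | base => exact le_rfl
  | succ i hpi ih =>
    by_cases hdrop : w (i + 1) < w i
    · exact hw.2 _ _ ⟨h, .inr hdesc⟩ ⟨hin, .inr hdrop⟩ (by omega)
    · have := ih (by omega) (by omega)
      omega

theorem isRunThen_suffix (hw : w ∈ FlatCat n) (h : runEnd n w + 1 < n) :
    IsRunThen n (runEnd n w) (w (runEnd n w + 1)) w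
      (suffix n (runEnd n w) (w (runEnd n w + 1)) w) where
  run := isStepRun_runEnd hw.1
  lt_length := h
  lt_last := (runEnd_spec n w).resolve_left (by omega)
  head := by simp [suffix, h]
  tail i hi hin := by
    have := apply_runEnd_succ_le hw h hi hin
    rw [suffix, if_pos (by omega), Nat.sub_add_cancel (show runEnd n w + 1 ≤ i by omega)]
    omega
  vanish := hw.1.2.2
  vanish_tail i hi := if_neg (by omega)

end Decomposition

def dual (n : ℕ) (w : ℕ → ℕ) : ℕ → ℕ :=
  if runEnd n w + 1 < n then
    let p := runEnd n w
    let c := w (p + 1)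
    let s := mark p c w
    fun i => if i ≤ p then flipRun s w i
      else if i < n then dual (n - (p + 1)) (suffix n p c w) (i - (p + 1)) + (s - c) else 0
  else fun i => if i < n then i - w i else 0
termination_by n
decreasing_by omega

section Dual

variable {n : ℕ} {w : ℕ → ℕ}

theorem dual_of_lt (h : runEnd n w + 1 < n) (i : ℕ) :
    dual n w i = if i ≤ runEnd n w then flipRun (mark (runEnd n w) (w (runEnd n w + 1)) w) w i
      else if i < n then
        dual (n - (runEnd n w + 1)) (suffix n (runEnd n w) (w (runEnd n w + 1)) w)
          (i - (runEnd n w + 1)) + (mark (runEnd n w) (w (runEnd n w + 1)) w - w (runEnd n w + 1))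
      else 0 := by
  rw [dual, if_pos h]

theorem dual_of_le (h : n ≤ runEnd n w + 1) (i : ℕ) :
    dual n w i = if i < n then i - w i else 0 := by
  rw [dual, if_neg (by omega)]

theorem dual_zero (n : ℕ) (w : ℕ → ℕ) : dual n w 0 = 0 := by
  by_cases h : runEnd n w + 1 < n
  · simp [dual_of_lt h, flipRun]
  · simp [dual_of_le (not_lt.1 h)]

theorem dual_eq_zero {i : ℕ} (hi : n ≤ i) : dual n w i = 0 := by
  by_cases h : runEnd n w + 1 < n
  · simp [dual_of_lt h, show ¬ i ≤ runEnd n w by omega, show ¬ i < n by omega]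
  · simp [dual_of_le (not_lt.1 h), show ¬ i < n by omega]

theorem isStepRun_dual (h : IsStepRun (n - 1) w) : IsStepRun (n - 1) (dual n w) :=
  (h.flipRun (s := n - 1) (by omega)).congr fun i hi => by
    rw [dual_of_le (le_runEnd_of_isStepRun h), flipRun]
    split_ifs <;> omega

theorem dual_apply_of_isStepRun (h : IsStepRun (n - 1) w) {i : ℕ} (hi : i < n) :
    dual n w i = i - w i := by
  rw [dual_of_le (le_runEnd_of_isStepRun h), if_pos hi]

namespace IsRunThen

variable {p c : ℕ} {u : ℕ → ℕ}

theorem dual_eq (h : IsRunThen n p c w u) (i : ℕ) :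
    dual n w i = if i ≤ p then flipRun (mark p c w) w i
      else if i < n then dual (n - (p + 1)) u (i - (p + 1)) + (mark p c w - c) else 0 := by
  rw [dual_of_lt (h.runEnd_eq ▸ h.lt_length), h.runEnd_eq, h.apply_succ, h.suffix_eq]

theorem dual_apply_of_le (h : IsRunThen n p c w u) {i : ℕ} (hi : i ≤ p) :
    dual n w i = flipRun (mark p c w) w i := by
  rw [h.dual_eq, if_pos hi]

theorem mark_succ (h : IsRunThen n p c w u) : mark p c w < p →
    w (mark p c w + 1) = w (mark p c w) + 1 := fun _ => by
  have := h.run.mark_spec h.lt_last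
  omega

protected theorem dual (h : IsRunThen n p c w u) :
    IsRunThen n p (mark p c w - c) (dual n w) (dual (n - (p + 1)) u) where
  run := (h.run.flipRun h.mark_succ).congr fun _ hi => h.dual_apply_of_le hi
  lt_length := h.lt_length
  lt_last := h.dual_apply_of_le le_rfl ▸ h.run.mark_sub_lt_flipRun h.lt_last
  head := dual_zero _ _
  tail i hi hin := by rw [h.dual_eq, if_neg (by omega), if_pos hin]
  vanish _ hi := dual_eq_zero hi
  vanish_tail _ hi := dual_eq_zero hi

end IsRunThen

theorem dual_mem (hw : w ∈ FlatCat n) : dual n w ∈ FlatCat n := by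
  induction n using Nat.strong_induction_on generalizing w with
  | _ n ih =>
  by_cases h : runEnd n w + 1 < n
  · have hsplit := isRunThen_suffix hw h
    exact hsplit.dual.mem_iff.2 (ih _ (by omega) (hsplit.mem_iff.1 hw))
  · exact mem_of_isStepRun (isStepRun_dual (isStepRun_of_le_runEnd hw.1 (by omega)))
      fun _ hi => dual_eq_zero hi

theorem ascentCount_dual (hw : w ∈ FlatCat n) :
    ascentCount n (dual n w) = n - 1 - ascentCount n w := by
  induction n using Nat.strong_induction_on generalizing w with
  | _ n ih =>
  by_cases h : runEnd n w + 1 < n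
  · have hsplit := isRunThen_suffix hw h
    obtain ⟨hlt, -, -⟩ := hsplit.run.mark_spec hsplit.lt_last
    have := hsplit.run.le_self le_rfl
    have := ascentCount_le (n - (runEnd n w + 1)) (suffix n (runEnd n w) (w (runEnd n w + 1)) w)
    rw [hsplit.dual.ascentCount_eq, hsplit.ascentCount_eq, ih _ (by omega) (hsplit.mem_iff.1 hw),
      hsplit.dual_apply_of_le le_rfl, flipRun, if_pos hlt]
    omega
  · have hrun := isStepRun_of_le_runEnd hw.1 (by omega)
    rw [ascentCount_of_isStepRun (isStepRun_dual hrun), ascentCount_of_isStepRun hrun]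
    rcases Nat.eq_zero_or_pos n with rfl | hn
    · simp [dual_zero]
    · rw [dual_apply_of_isStepRun hrun (by omega)]

theorem dual_dual (hw : w ∈ FlatCat n) : dual n (dual n w) = w := by
  induction n using Nat.strong_induction_on generalizing w with
  | _ n ih =>
  by_cases h : runEnd n w + 1 < n
  · have hsplit := isRunThen_suffix hw h
    obtain ⟨hlt, hmark, -⟩ := hsplit.run.mark_spec hsplit.lt_last
    have := hsplit.run.le_self hlt.le
    funext i
    rw [hsplit.dual.dual_eq, hsplit.run.mark_eq_of_eqOn_flipRun hsplit.lt_last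
      fun _ hi => hsplit.dual_apply_of_le hi, ih _ (by omega) (hsplit.mem_iff.1 hw)]
    split_ifs with hip hin
    · show i - dual n w i + _ = w i
      rw [hsplit.dual_apply_of_le hip]
      exact hsplit.run.flipRun_flipRun hsplit.mark_succ hip
    · rw [hsplit.tail i (by omega) hin]
      omega
    · exact (hsplit.vanish i (by omega)).symm
  · have hrun := isStepRun_of_le_runEnd hw.1 (by omega)
    funext i
    by_cases hin : i < n
    · have := hrun.le_self (show i ≤ n - 1 by omega)
      rw [dual_apply_of_isStepRun (isStepRun_dual hrun) hin, dual_apply_of_isStepRun hrun hin]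
      omega
    · rw [dual_eq_zero (by omega), hw.1.2.2 i (by omega)]

end Dual

end FlatCat

theorem flatCat_wrunsDesc_eq_runsAsc_general (n k : ℕ) :
    {w ∈ FlatCat n | wrunsDesc n w = k}.ncard =
      {w ∈ FlatCat n | runsAsc n w = k}.ncard :=
  Set.ncard_sep_eq_of_involution (fun _ hw => FlatCat.dual_mem hw)
    (fun _ hw => FlatCat.dual_dual hw)
    (fun w hw => by
      rw [FlatCat.runsAsc_eq, FlatCat.wrunsDesc_eq, FlatCat.ascentCount_dual hw]
      have := FlatCat.ascentCount_le n w
      omega) k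

/-- For all `n, k ≥ 1`, flattened Catalan words of length `n` with exactly `k`
runs of weak descents are equinumerous with those with exactly `k` runs of
ascents. -/
theorem flatCat_wrunsDesc_eq_runsAsc (n k : ℕ) (hn : 1 ≤ n) (hk : 1 ≤ k) :
    {w ∈ FlatCat n | wrunsDesc n w = k}.ncard =
      {w ∈ FlatCat n | runsAsc n w = k}.ncard :=
  flatCat_wrunsDesc_eq_runsAsc_general n k
end

section
/- For every integer n ≥ 4, the total number of valleys, summed over all flattened Catalan words of length n, equals (3^n·(n − 4) + 9n)/36. -/
/-!
A flattened Catalan word of length `n + 1` is a flattened word `w` of length `n` followed by a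
letter `c` with `a ≤ c ≤ x + 1`, where `x` is the last letter of `w` and `a` the head of its last
weakly increasing run. Put `d = x - a`. The `d` letters `c < x` open a new run, a plateau of
length one entered by a descent; `c = x` changes none of the statistics below; `c = x + 1` raises
`d` by one and completes a new valley exactly when the last run of `w` is a plateau entered by a
descent (`z = 1`). Summing over all words of length `n` the quantities `1`, `d`, `z`, the number
of valleys `v`, and `v d` (using `z d = 0`) gives the linear recurrences
`C' = D + 2C`, `D' = 2D + C`, `Z' = D + Z`, `V' = W + 2V + Z`, `W' = 2W + V + Z`,
which are solved from the single word `0` of length one.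
-/

namespace FlatCat

open Function Finset

section LastRun

variable {n : ℕ} {w : ℕ → ℕ}

def lastRunStart (n : ℕ) (w : ℕ → ℕ) : ℕ :=
  Nat.findGreatest (fun j => j = 0 ∨ w j < w (j - 1)) (n - 1)

def lastRunHead (n : ℕ) (w : ℕ → ℕ) : ℕ := w (lastRunStart n w)

lemma lastRunStart_le_pred : lastRunStart n w ≤ n - 1 := Nat.findGreatest_le _

lemma lastRunStart_lt (hn : 1 ≤ n) : lastRunStart n w < n := by
  have := lastRunStart_le_pred (n := n) (w := w)
  omega

lemma isRunStart_lastRunStart (hn : 1 ≤ n) : IsRunStart n w (lastRunStart n w) :=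
  ⟨lastRunStart_lt hn,
    Nat.findGreatest_spec (P := fun j => j = 0 ∨ w j < w (j - 1)) (Nat.zero_le _) (Or.inl rfl)⟩

lemma le_lastRunStart_of_isRunStart {j : ℕ} (h : IsRunStart n w j) : j ≤ lastRunStart n w :=
  Nat.le_findGreatest (by have := h.1; omega) h.2

lemma le_of_lastRunStart_lt {k : ℕ} (hk : lastRunStart n w < k) (hkn : k < n) :
    w (k - 1) ≤ w k := by
  have := Nat.findGreatest_is_greatest hk (by omega)
  simp only [not_or] at this
  omega

lemma lastRunStart_eq {j : ℕ} (hj : IsRunStart n w j)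
    (hmax : ∀ k, j < k → k < n → w (k - 1) ≤ w k) : lastRunStart n w = j :=
  Nat.findGreatest_eq_iff.2 ⟨by have := hj.1; omega, fun _ => hj.2, fun k hjk hk hrs => by
    have := hmax k hjk (by omega)
    omega⟩

lemma monotoneOn_lastRun : MonotoneOn w (Set.Icc (lastRunStart n w) (n - 1)) :=
  monotoneOn_of_le_succ Set.ordConnected_Icc fun k _ hk hk1 => by
    rw [Order.succ_eq_add_one] at hk1 ⊢
    simpa using le_of_lastRunStart_lt (n := n) (w := w) (k := k + 1)
      (by have := hk.1; omega) (by have := hk1.2; omega)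

lemma lastRunHead_le : lastRunHead n w ≤ w (n - 1) :=
  monotoneOn_lastRun ⟨le_rfl, lastRunStart_le_pred⟩ ⟨lastRunStart_le_pred, le_rfl⟩
    lastRunStart_le_pred

lemma le_lastRunHead_of_isRunStart (hf : IsFlattened n w) (hn : 1 ≤ n) {j : ℕ}
    (hj : IsRunStart n w j) : w j ≤ lastRunHead n w :=
  hf j _ hj (isRunStart_lastRunStart hn) (le_lastRunStart_of_isRunStart hj)

end LastRun

lemma isRunStart_iff_of_eq {m n j : ℕ} {v w : ℕ → ℕ} (hjm : j < m) (hjn : j < n)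
    (h : ∀ i ≤ j, v i = w i) : IsRunStart m v j ↔ IsRunStart n w j := by
  simp only [IsRunStart, h j le_rfl, h (j - 1) (by omega), hjm, hjn, true_and]

section Append

variable {n c : ℕ} {w : ℕ → ℕ}

lemma update_of_lt {i : ℕ} (hi : i < n) : update w n c i = w i := update_of_ne (by omega) _ _

lemma isRunStart_update_iff {j : ℕ} (hj : j < n) :
    IsRunStart (n + 1) (update w n c) j ↔ IsRunStart n w j :=
  isRunStart_iff_of_eq (by omega) hj fun _ hi => update_of_lt (by omega)

lemma update_isCatalanWord_iff (hn : 1 ≤ n) (hw : IsCatalanWord n w) :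
    IsCatalanWord (n + 1) (update w n c) ↔ c ≤ w (n - 1) + 1 := by
  obtain ⟨h0, hstep, hzero⟩ := hw
  have hlast : update w n c (n - 1) = w (n - 1) := update_of_lt (by omega)
  constructor
  · rintro ⟨-, hstep', -⟩
    simpa [Nat.sub_add_cancel hn, hlast] using hstep' (n - 1) (by omega)
  · intro hc
    refine ⟨by rw [update_of_lt hn, h0], fun i hi => ?_, fun i hi => ?_⟩
    · rcases Nat.lt_or_ge (i + 1) n with h | h
      · rw [update_of_lt h, update_of_lt (by omega)]
        exact hstep i h
      · obtain rfl : i = n - 1 := by omega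
        rwa [Nat.sub_add_cancel hn, update_self, hlast]
    · rw [update_of_ne (by omega)]
      exact hzero i (by omega)

lemma update_isFlattened_iff (hn : 1 ≤ n) (hw : IsFlattened n w) :
    IsFlattened (n + 1) (update w n c) ↔ lastRunHead n w ≤ c := by
  have hls : lastRunStart n w < n := lastRunStart_lt hn
  constructor
  · intro hw'
    rcases Nat.lt_or_ge c (w (n - 1)) with hcx | hcx
    · have hrs : IsRunStart (n + 1) (update w n c) n :=
        ⟨by omega, Or.inr (by rwa [update_self, update_of_lt (by omega)])⟩
      have := hw' _ _ ((isRunStart_update_iff hls).2 (isRunStart_lastRunStart hn)) hrs hls.le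
      rwa [update_self, update_of_lt hls] at this
    · exact lastRunHead_le.trans hcx
  · intro hac i j hi hj hij
    rcases Nat.lt_or_ge j n with hjn | hjn
    · have hin : i < n := by omega
      rw [update_of_lt hin, update_of_lt hjn]
      exact hw i j ((isRunStart_update_iff hin).1 hi) ((isRunStart_update_iff hjn).1 hj) hij
    · obtain rfl : j = n := by have := hj.1; omega
      rw [update_self]
      rcases Nat.lt_or_ge i j with hin | hin
      · rw [update_of_lt hin]
        exact (le_lastRunHead_of_isRunStart hw hn ((isRunStart_update_iff hin).1 hi)).trans hac
      · obtain rfl : i = j := by omega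
        rw [update_self]

lemma update_mem_flatCat_iff (hn : 1 ≤ n) (hw : w ∈ FlatCat n) :
    update w n c ∈ FlatCat (n + 1) ↔ c ∈ Icc (lastRunHead n w) (w (n - 1) + 1) := by
  rw [mem_Icc, FlatCat, Set.mem_ofPred_eq, update_isCatalanWord_iff hn hw.1,
    update_isFlattened_iff hn hw.2, and_comm]

lemma update_zero_mem_flatCat {v : ℕ → ℕ} (hv : v ∈ FlatCat (n + 1)) :
    update v n 0 ∈ FlatCat n := by
  obtain ⟨⟨h0, hstep, hzero⟩, hf⟩ := hv
  have hagree : ∀ i < n, update v n 0 i = v i := fun _ hi => update_of_lt hi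
  refine ⟨⟨?_, fun i hi => ?_, fun i hi => ?_⟩, fun i j hi hj hij => ?_⟩
  · rcases Nat.eq_zero_or_pos n with rfl | hn
    · exact update_self ..
    · rw [hagree 0 hn, h0]
  · rw [hagree _ hi, hagree _ (by omega)]
    exact hstep i (by omega)
  · rcases hi.eq_or_lt with rfl | hi
    · exact update_self ..
    · rw [update_of_ne (by omega)]
      exact hzero i hi
  · have hrs : ∀ k, IsRunStart n (update v n 0) k → IsRunStart (n + 1) v k := fun k hk =>
      (isRunStart_iff_of_eq hk.1 (by have := hk.1; omega)
        fun i hi => hagree i (by have := hk.1; omega)).1 hk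
    rw [hagree i hi.1, hagree j hj.1]
    exact hf i j (hrs i hi) (hrs j hj) hij

lemma update_update_zero (v : ℕ → ℕ) : update (update v n 0) n (v n) = v := by
  rw [update_idem, update_eq_self]

lemma update_zero_update (hw : w n = 0) : update (update w n c) n 0 = w := by
  rw [update_idem, update_eq_self_iff, hw]

end Append

lemma apply_le_of_isCatalanWord {n : ℕ} {w : ℕ → ℕ} (hw : IsCatalanWord n w) (i : ℕ) : w i ≤ i := by
  induction i with
  | zero => exact hw.1.le
  | succ i ih =>
    rcases Nat.lt_or_ge (i + 1) n with h | h
    · exact (hw.2.1 i h).trans (by omega)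
    · rw [hw.2.2 _ h]
      exact Nat.zero_le _

lemma finite (n : ℕ) : (FlatCat n).Finite := by
  refine (Set.finite_range fun (g : Fin n → Fin n) (i : ℕ) =>
    if h : i < n then (g ⟨i, h⟩ : ℕ) else 0).subset fun w hw => ?_
  refine ⟨fun i => ⟨w i, (apply_le_of_isCatalanWord hw.1 i).trans_lt i.2⟩, funext fun i => ?_⟩
  dsimp only
  split_ifs with h
  · rfl
  · exact (hw.1.2.2 i (by omega)).symm

noncomputable def finset (n : ℕ) : Finset (ℕ → ℕ) := (finite n).toFinset

lemma mem_finset {n : ℕ} {w : ℕ → ℕ} : w ∈ finset n ↔ w ∈ FlatCat n :=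
  Set.Finite.mem_toFinset _

lemma sum_finset_succ {M : Type*} [AddCommMonoid M] {n : ℕ} (hn : 1 ≤ n)
    (f : (ℕ → ℕ) → M) :
    ∑ v ∈ finset (n + 1), f v =
      ∑ w ∈ finset n, ∑ c ∈ Icc (lastRunHead n w) (w (n - 1) + 1), f (update w n c) := by
  rw [sum_sigma']
  refine sum_nbij' (fun v => ⟨update v n 0, v n⟩) (fun p => update p.1 n p.2) ?_ ?_ ?_ ?_ ?_
  · intro v hv
    rw [mem_finset] at hv
    have hw := update_zero_mem_flatCat hv
    rw [mem_sigma, mem_finset, ← update_mem_flatCat_iff hn hw, update_update_zero v]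
    exact ⟨hw, hv⟩
  · rintro ⟨w, c⟩ hp
    rw [mem_sigma, mem_finset] at hp
    rw [mem_finset]
    exact (update_mem_flatCat_iff hn hp.1).2 hp.2
  · exact fun v _ => update_update_zero v
  · rintro ⟨w, c⟩ hp
    rw [mem_sigma, mem_finset] at hp
    simp only [update_zero_update (hp.1.1.2.2 n le_rfl), update_self]
  · exact fun v _ => congrArg f (update_update_zero v).symm

def lastRunRise (n : ℕ) (w : ℕ → ℕ) : ℕ := w (n - 1) - lastRunHead n w

/-- `1` when the last run of `w` is a plateau `b^ℓ` entered by a descent, so that appending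
`b + 1` completes a valley. -/
def pendingValley (n : ℕ) (w : ℕ → ℕ) : ℕ :=
  if 1 ≤ lastRunStart n w ∧ w (n - 1) = lastRunHead n w then 1 else 0

lemma pendingValley_mul_lastRunRise (n : ℕ) (w : ℕ → ℕ) :
    pendingValley n w * lastRunRise n w = 0 := by
  unfold pendingValley lastRunRise
  split_ifs with h
  · omega
  · exact zero_mul _

section AppendStatistics

variable {n c : ℕ} {w : ℕ → ℕ}

lemma lastRunStart_update_of_lt (hn : 1 ≤ n) (hc : c < w (n - 1)) :
    lastRunStart (n + 1) (update w n c) = n :=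
  lastRunStart_eq ⟨by omega, Or.inr (by rwa [update_self, update_of_lt (by omega)])⟩
    fun k hk hkn => by omega

lemma lastRunStart_update_of_ge (hn : 1 ≤ n) (hc : w (n - 1) ≤ c) :
    lastRunStart (n + 1) (update w n c) = lastRunStart n w := by
  have hls : lastRunStart n w < n := lastRunStart_lt hn
  refine lastRunStart_eq ((isRunStart_update_iff hls).2 (isRunStart_lastRunStart hn))
    fun k hk hkn => ?_
  rcases Nat.lt_or_ge k n with hkn' | hkn'
  · rw [update_of_lt hkn', update_of_lt (by omega)]
    exact le_of_lastRunStart_lt hk hkn'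
  · obtain rfl : k = n := by omega
    rwa [update_self, update_of_lt (by omega)]

lemma lastRunHead_update_of_lt (hn : 1 ≤ n) (hc : c < w (n - 1)) :
    lastRunHead (n + 1) (update w n c) = c := by
  rw [lastRunHead, lastRunStart_update_of_lt hn hc, update_self]

lemma lastRunHead_update_of_ge (hn : 1 ≤ n) (hc : w (n - 1) ≤ c) :
    lastRunHead (n + 1) (update w n c) = lastRunHead n w := by
  rw [lastRunHead, lastRunStart_update_of_ge hn hc, lastRunHead,
    update_of_lt (lastRunStart_lt hn)]

lemma lastRunRise_update_of_lt (hn : 1 ≤ n) (hc : c < w (n - 1)) :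
    lastRunRise (n + 1) (update w n c) = 0 := by
  rw [lastRunRise, Nat.add_sub_cancel, lastRunHead_update_of_lt hn hc, update_self, Nat.sub_self]

lemma lastRunRise_update_self (hn : 1 ≤ n) :
    lastRunRise (n + 1) (update w n (w (n - 1))) = lastRunRise n w := by
  rw [lastRunRise, Nat.add_sub_cancel, lastRunHead_update_of_ge hn le_rfl, update_self,
    lastRunRise]

lemma lastRunRise_update_succ (hn : 1 ≤ n) :
    lastRunRise (n + 1) (update w n (w (n - 1) + 1)) = lastRunRise n w + 1 := by
  rw [lastRunRise, Nat.add_sub_cancel, lastRunHead_update_of_ge hn (by omega), update_self,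
    lastRunRise]
  have := lastRunHead_le (n := n) (w := w)
  omega

lemma pendingValley_update_of_lt (hn : 1 ≤ n) (hc : c < w (n - 1)) :
    pendingValley (n + 1) (update w n c) = 1 := by
  rw [pendingValley, Nat.add_sub_cancel, lastRunHead_update_of_lt hn hc,
    lastRunStart_update_of_lt hn hc, update_self, if_pos ⟨hn, rfl⟩]

lemma pendingValley_update_self (hn : 1 ≤ n) :
    pendingValley (n + 1) (update w n (w (n - 1))) = pendingValley n w := by
  rw [pendingValley, Nat.add_sub_cancel, lastRunHead_update_of_ge hn le_rfl,
    lastRunStart_update_of_ge hn le_rfl, update_self, pendingValley]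

lemma pendingValley_update_succ (hn : 1 ≤ n) :
    pendingValley (n + 1) (update w n (w (n - 1) + 1)) = 0 := by
  rw [pendingValley, Nat.add_sub_cancel, lastRunHead_update_of_ge hn (by omega), update_self,
    if_neg]
  have := lastRunHead_le (n := n) (w := w)
  omega

end AppendStatistics

def valleySet (n : ℕ) (w : ℕ → ℕ) : Set (ℕ × ℕ) := {p | 1 ≤ p.2 ∧ IsLValley n w p.2 p.1}

lemma valleySet_finite (n : ℕ) (w : ℕ → ℕ) : (valleySet n w).Finite :=
  ((Set.finite_Iio n).prod (Set.finite_Iio n)).subset fun _ ⟨_, hv⟩ =>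
    ⟨Set.mem_Iio.2 (by have := hv.1; omega), Set.mem_Iio.2 (by have := hv.1; omega)⟩

section AppendValleys

variable {n c i l : ℕ} {w : ℕ → ℕ}

lemma isLValley_update_of_lt (h : i + l + 1 < n) :
    IsLValley (n + 1) (update w n c) l i ↔ IsLValley n w l i := by
  have e : ∀ k ≤ i + l + 1, update w n c k = w k := fun k hk => update_of_lt (by omega)
  simp only [IsLValley, e i (by omega), e (i + 1) (by omega), e (i + l + 1) le_rfl]
  constructor
  · rintro ⟨-, hdesc, hplat, htop⟩
    exact ⟨h, hdesc, fun t ht ht' => (e _ (by omega)).symm.trans (hplat t ht ht'), htop⟩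
  · rintro ⟨-, hdesc, hplat, htop⟩
    exact ⟨by omega, hdesc, fun t ht ht' => (e _ (by omega)).trans (hplat t ht ht'), htop⟩

lemma isLValley_update_last_iff (hn : 1 ≤ n) (hl : 1 ≤ l) (h : i + l + 1 = n) :
    IsLValley (n + 1) (update w n c) l i ↔
      i + 1 = lastRunStart n w ∧ w (n - 1) = lastRunHead n w ∧ c = w (n - 1) + 1 := by
  have e : ∀ k < n, update w n c k = w k := fun _ hk => update_of_lt hk
  simp only [IsLValley, e i (by omega), e (i + 1) (by omega), h, update_self]
  constructor
  · rintro ⟨-, hdesc, hplat, htop⟩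
    have hplat' : ∀ k, i + 1 ≤ k → k < n → w k = w (i + 1) := fun k hk hkn => by
      have := hplat (k - i) (by omega) (by omega)
      rwa [Nat.add_sub_cancel' (by omega), e k hkn] at this
    have hls : lastRunStart n w = i + 1 :=
      lastRunStart_eq ⟨by omega, Or.inr (by simpa using hdesc)⟩ fun k hk hkn => by
        rw [hplat' k (by omega) hkn, hplat' (k - 1) (by omega) (by omega)]
    have hlast : w (n - 1) = w (i + 1) := hplat' (n - 1) (by omega) (by omega)
    exact ⟨hls.symm, by rw [lastRunHead, hls, hlast], by rw [hlast, htop]⟩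
  · rintro ⟨hls, hhead, hc⟩
    have hplat : ∀ k, i + 1 ≤ k → k ≤ n - 1 → w k = w (i + 1) := fun k hk hkn => by
      rw [hls] at hk ⊢
      have h1 : lastRunHead n w ≤ w k :=
        monotoneOn_lastRun ⟨le_rfl, lastRunStart_le_pred⟩ ⟨hk, hkn⟩ hk
      have h2 : w k ≤ w (n - 1) := monotoneOn_lastRun ⟨hk, hkn⟩ ⟨hk.trans hkn, le_rfl⟩ hkn
      rw [lastRunHead] at h1 hhead
      omega
    have hdesc : w (i + 1) < w i := by
      rcases (isRunStart_lastRunStart hn (w := w)).2 with h0 | h0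
      · omega
      · simpa [← hls] using h0
    refine ⟨by omega, hdesc, fun t ht ht' => ?_, ?_⟩
    · rw [e _ (by omega), hplat _ (by omega) (by omega)]
    · rw [hc, hplat (n - 1) (by omega) le_rfl]

lemma mem_valleySet_update (hn : 1 ≤ n) {p : ℕ × ℕ} :
    p ∈ valleySet (n + 1) (update w n c) ↔ p ∈ valleySet n w ∨
      (p = (lastRunStart n w - 1, n - lastRunStart n w) ∧ 1 ≤ lastRunStart n w ∧
        w (n - 1) = lastRunHead n w ∧ c = w (n - 1) + 1) := by
  obtain ⟨i, l⟩ := p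
  have hls := lastRunStart_le_pred (n := n) (w := w)
  simp only [valleySet, Set.mem_ofPred_eq, Prod.mk.injEq]
  rcases lt_trichotomy (i + l + 1) n with h | h | h
  · rw [isLValley_update_of_lt h]
    constructor
    · exact Or.inl
    · rintro (hv | ⟨⟨rfl, rfl⟩, h1, -⟩)
      · exact hv
      · omega
  · constructor
    · rintro ⟨hl, hv⟩
      obtain ⟨hi, hhead, hc⟩ := (isLValley_update_last_iff hn hl h).1 hv
      exact Or.inr ⟨⟨by omega, by omega⟩, by omega, hhead, hc⟩
    · rintro (⟨-, hv⟩ | ⟨⟨rfl, rfl⟩, h1, hhead, hc⟩)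
      · exact absurd hv.1 (by omega)
      · exact ⟨by omega, (isLValley_update_last_iff hn (by omega) h).2 ⟨by omega, hhead, hc⟩⟩
  · constructor
    · rintro ⟨-, hv⟩
      exact absurd hv.1 (by omega)
    · rintro (⟨-, hv⟩ | ⟨⟨rfl, rfl⟩, h1, -⟩)
      · exact absurd hv.1 (by omega)
      · omega

lemma valleyCount_update_of_ne (hn : 1 ≤ n) (hc : c ≠ w (n - 1) + 1) :
    valleyCount (n + 1) (update w n c) = valleyCount n w := by
  change (valleySet _ _).ncard = (valleySet _ _).ncard
  congr 1
  ext p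
  rw [mem_valleySet_update hn]
  tauto

lemma valleyCount_update_succ (hn : 1 ≤ n) :
    valleyCount (n + 1) (update w n (w (n - 1) + 1)) = valleyCount n w + pendingValley n w := by
  change (valleySet _ _).ncard = (valleySet _ _).ncard + _
  unfold pendingValley
  split_ifs with h
  · have hnew : (lastRunStart n w - 1, n - lastRunStart n w) ∉ valleySet n w := fun hv => by
      have := hv.2.1
      have := lastRunStart_le_pred (n := n) (w := w)
      omega
    rw [← Set.ncard_insert_of_notMem hnew (valleySet_finite n w)]
    congr 1
    ext p
    rw [mem_valleySet_update hn, Set.mem_insert_iff]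
    tauto
  · congr 1
    ext p
    rw [mem_valleySet_update hn]
    tauto

end AppendValleys

lemma sum_update_statistics {n : ℕ} {w : ℕ → ℕ} (hn : 1 ≤ n) (F : ℚ → ℚ → ℚ → ℚ) :
    ∑ c ∈ Icc (lastRunHead n w) (w (n - 1) + 1),
        F (lastRunRise (n + 1) (update w n c)) (pendingValley (n + 1) (update w n c))
          (valleyCount (n + 1) (update w n c)) =
      lastRunRise n w * F 0 1 (valleyCount n w) +
        F (lastRunRise n w) (pendingValley n w) (valleyCount n w) +
        F (lastRunRise n w + 1) 0 (valleyCount n w + pendingValley n w) := by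
  have hlow : ∀ c ∈ Ico (lastRunHead n w) (w (n - 1)),
      F (lastRunRise (n + 1) (update w n c)) (pendingValley (n + 1) (update w n c))
        (valleyCount (n + 1) (update w n c)) = F 0 1 (valleyCount n w) := fun c hc => by
    have hc := (mem_Ico.1 hc).2
    rw [lastRunRise_update_of_lt hn hc, pendingValley_update_of_lt hn hc,
      valleyCount_update_of_ne hn (by omega), Nat.cast_zero, Nat.cast_one]
  have := lastRunHead_le (n := n) (w := w)
  rw [← Ico_add_one_right_eq_Icc, sum_Ico_succ_top (by omega), sum_Ico_succ_top (by omega),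
    sum_congr rfl hlow, sum_const, Nat.card_Ico, nsmul_eq_mul, lastRunRise_update_self hn,
    pendingValley_update_self hn, valleyCount_update_of_ne hn (by omega),
    lastRunRise_update_succ hn, pendingValley_update_succ hn, valleyCount_update_succ hn]
  push_cast
  rfl

lemma sum_finset_succ_statistics {n : ℕ} (hn : 1 ≤ n) (F : ℚ → ℚ → ℚ → ℚ) :
    ∑ v ∈ finset (n + 1),
        F (lastRunRise (n + 1) v) (pendingValley (n + 1) v) (valleyCount (n + 1) v) =
      ∑ w ∈ finset n, (lastRunRise n w * F 0 1 (valleyCount n w) +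
        F (lastRunRise n w) (pendingValley n w) (valleyCount n w) +
        F (lastRunRise n w + 1) 0 (valleyCount n w + pendingValley n w)) := by
  rw [sum_finset_succ hn]
  exact sum_congr rfl fun w _ => sum_update_statistics hn F

noncomputable def wordTotal (n : ℕ) : ℚ := ∑ _w ∈ finset n, 1

noncomputable def riseTotal (n : ℕ) : ℚ := ∑ w ∈ finset n, (lastRunRise n w : ℚ)

noncomputable def pendingTotal (n : ℕ) : ℚ := ∑ w ∈ finset n, (pendingValley n w : ℚ)

noncomputable def valleyTotal (n : ℕ) : ℚ := ∑ w ∈ finset n, (valleyCount n w : ℚ)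

noncomputable def valleyRiseTotal (n : ℕ) : ℚ :=
  ∑ w ∈ finset n, (valleyCount n w : ℚ) * lastRunRise n w

section Recurrences

variable {n : ℕ} (hn : 1 ≤ n)
include hn

lemma wordTotal_succ : wordTotal (n + 1) = riseTotal n + 2 * wordTotal n := by
  have h := sum_finset_succ_statistics hn fun _ _ _ => 1
  rw [wordTotal, h, riseTotal, wordTotal, mul_sum, ← sum_add_distrib]
  exact sum_congr rfl fun w _ => by ring

lemma riseTotal_succ : riseTotal (n + 1) = 2 * riseTotal n + wordTotal n := by
  have h := sum_finset_succ_statistics hn fun d _ _ => d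
  rw [riseTotal, h, riseTotal, wordTotal, mul_sum, ← sum_add_distrib]
  exact sum_congr rfl fun w _ => by ring

lemma pendingTotal_succ : pendingTotal (n + 1) = riseTotal n + pendingTotal n := by
  have h := sum_finset_succ_statistics hn fun _ z _ => z
  rw [pendingTotal, h, riseTotal, pendingTotal, ← sum_add_distrib]
  exact sum_congr rfl fun w _ => by ring

lemma valleyTotal_succ :
    valleyTotal (n + 1) = valleyRiseTotal n + 2 * valleyTotal n + pendingTotal n := by
  have h := sum_finset_succ_statistics hn fun _ _ v => v
  rw [valleyTotal, h, valleyRiseTotal, valleyTotal, pendingTotal, mul_sum, ← sum_add_distrib,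
    ← sum_add_distrib]
  exact sum_congr rfl fun w _ => by ring

lemma valleyRiseTotal_succ :
    valleyRiseTotal (n + 1) = 2 * valleyRiseTotal n + valleyTotal n + pendingTotal n := by
  have h := sum_finset_succ_statistics hn fun d _ v => v * d
  rw [valleyRiseTotal, h, valleyRiseTotal, valleyTotal, pendingTotal, mul_sum,
    ← sum_add_distrib, ← sum_add_distrib]
  refine sum_congr rfl fun w _ => ?_
  have hzd : (pendingValley n w : ℚ) * lastRunRise n w = 0 := by
    exact_mod_cast pendingValley_mul_lastRunRise n w
  linear_combination hzd

end Recurrences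

lemma finset_one : finset 1 = {0} := by
  ext w
  rw [mem_finset, mem_singleton]
  constructor
  · rintro ⟨⟨h0, -, hzero⟩, -⟩
    funext i
    rcases i with _ | i
    · exact h0
    · exact hzero _ (by omega)
  · rintro rfl
    exact ⟨⟨rfl, fun _ _ => zero_le_one, fun _ _ => rfl⟩, fun _ _ _ _ _ => le_rfl⟩

lemma totals_one :
    wordTotal 1 = 1 ∧ riseTotal 1 = 0 ∧ pendingTotal 1 = 0 ∧ valleyTotal 1 = 0 ∧
      valleyRiseTotal 1 = 0 := by
  have hvalley : valleyCount 1 0 = 0 :=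
    (Set.ncard_eq_zero (valleySet_finite 1 0)).2 <|
      Set.eq_empty_of_forall_notMem fun _ hv => hv.2.2.1.false
  simp [wordTotal, riseTotal, pendingTotal, valleyTotal, valleyRiseTotal, finset_one,
    hvalley, lastRunRise, pendingValley, lastRunStart]

lemma wordTotal_riseTotal_eq {n : ℕ} (hn : 1 ≤ n) :
    wordTotal n = (3 ^ n + 3) / 6 ∧ riseTotal n = (3 ^ n - 3) / 6 := by
  induction n, hn using Nat.le_induction with
  | base => norm_num [totals_one]
  | succ n hn ih =>
    rw [wordTotal_succ hn, riseTotal_succ hn, ih.1, ih.2, pow_succ]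
    constructor <;> ring

lemma pendingTotal_eq {n : ℕ} (hn : 1 ≤ n) : pendingTotal n = (3 ^ n - 6 * n + 3) / 12 := by
  induction n, hn using Nat.le_induction with
  | base => norm_num [totals_one]
  | succ n hn ih =>
    rw [pendingTotal_succ hn, ih, (wordTotal_riseTotal_eq hn).2, pow_succ]
    push_cast
    ring

lemma valleyTotal_eq {n : ℕ} (hn : 1 ≤ n) :
    valleyTotal n = (3 ^ n * ((n : ℚ) - 4) + 9 * n) / 36 ∧
      valleyRiseTotal n = (3 ^ n * ((n : ℚ) - 4) + 9 * n) / 36 := by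
  induction n, hn using Nat.le_induction with
  | base => norm_num [totals_one]
  | succ n hn ih =>
    rw [valleyTotal_succ hn, valleyRiseTotal_succ hn, ih.1, ih.2, pendingTotal_eq hn, pow_succ]
    push_cast
    constructor <;> ring

end FlatCat

/-- For every `n ≥ 4`, the total number of valleys over all flattened Catalan
words of length `n` equals `(3^n·(n - 4) + 9n)/36`. -/
theorem flatCat_total_valleys (n : ℕ) (hn : 4 ≤ n) :
    ((∑ᶠ w ∈ FlatCat n, valleyCount n w : ℕ) : ℚ) =
      (3 ^ n * ((n : ℚ) - 4) + 9 * (n : ℚ)) / 36 := by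
  rw [← (FlatCat.finite n).coe_toFinset, finsum_mem_coe_finset, Nat.cast_sum]
  exact (FlatCat.valleyTotal_eq (by omega)).1
end

section
/- For every integer n ≥ 4, the total number of symmetric valleys, summed over all flattened Catalan words of length n, equals (3^n·(2n − 5) − 18n² + 54n − 27)/144. -/
namespace SVAux

/-- Index of the last strict descent of the length-`n` word `w` (`0` if none). -/
def Jidx (n : ℕ) (w : ℕ → ℕ) : ℕ := Nat.findGreatest (fun j => w j < w (j - 1)) (n - 1)

/-- Value at the last run start. -/
def bv (n : ℕ) (w : ℕ → ℕ) : ℕ := w (Jidx n w)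

/-- The word ends with a pending symmetric-valley pattern `a (a-1)^k`. -/
def Pend (n : ℕ) (w : ℕ → ℕ) : Prop :=
  0 < Jidx n w ∧ w (Jidx n w - 1) = w (Jidx n w) + 1 ∧ w (n - 1) = w (Jidx n w)

instance (n : ℕ) (w : ℕ → ℕ) : Decidable (Pend n w) := by unfold Pend; infer_instance

variable {n : ℕ} {w : ℕ → ℕ}

lemma Jidx_le : Jidx n w ≤ n - 1 := Nat.findGreatest_le _

lemma Jidx_spec (h : 0 < Jidx n w) : w (Jidx n w) < w (Jidx n w - 1) :=
  (Nat.findGreatest_eq_iff.1 (rfl : Jidx n w = _)).2.1 (Nat.pos_iff_ne_zero.1 h)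

lemma Jidx_greatest {k : ℕ} (h1 : Jidx n w < k) (h2 : k ≤ n - 1) : ¬ w k < w (k - 1) :=
  (Nat.findGreatest_eq_iff.1 (rfl : Jidx n w = _)).2.2 h1 h2

lemma le_Jidx {k : ℕ} (h1 : k ≤ n - 1) (h2 : w k < w (k - 1)) : k ≤ Jidx n w :=
  Nat.le_findGreatest h1 h2

lemma Jidx_runStart (hn : 1 ≤ n) : IsRunStart n w (Jidx n w) := by
  have h := Jidx_le (n := n) (w := w)
  refine ⟨by omega, ?_⟩
  rcases Nat.eq_zero_or_pos (Jidx n w) with h0 | h0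
  · exact Or.inl h0
  · exact Or.inr (Jidx_spec h0)

lemma mono_after_Jidx {i j : ℕ} (h1 : Jidx n w ≤ i) (h2 : i ≤ j) (h3 : j ≤ n - 1) :
    w i ≤ w j := by
  obtain ⟨d, rfl⟩ := Nat.exists_eq_add_of_le h2
  clear h2
  induction d with
  | zero => simp
  | succ d ih =>
    have hle : i + d ≤ n - 1 := by omega
    refine (ih hle).trans ?_
    by_contra hlt
    push_neg at hlt
    have : w (i + (d+1)) < w ((i + (d + 1)) - 1) := by
      have : i + (d+1) - 1 = i + d := by omega
      rw [this]; exact hlt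
    exact absurd this (Jidx_greatest (n := n) (k := i + (d+1)) (by omega) (by omega))

lemma bv_le (hn : 1 ≤ n) : bv n w ≤ w (n - 1) :=
  mono_after_Jidx le_rfl Jidx_le le_rfl

lemma runStart_le_bv (hw : w ∈ FlatCat n) {j : ℕ} (hj : IsRunStart n w j) :
    w j ≤ bv n w := by
  have hn : 1 ≤ n := by have := hj.1; omega
  rcases hj.2 with h0 | hdesc
  · subst h0
    rw [hw.1.1]
    exact Nat.zero_le _
  · have hjJ : j ≤ Jidx n w := le_Jidx (by have := hj.1; omega) hdesc
    exact hw.2 j (Jidx n w) hj (Jidx_runStart hn) hjJ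

lemma val_le (hw : w ∈ FlatCat n) : ∀ i, w i ≤ i := by
  intro i
  induction i with
  | zero => exact hw.1.1.le
  | succ i ih =>
    by_cases h : i + 1 < n
    · exact (hw.1.2.1 i h).trans (by omega)
    · rw [hw.1.2.2 (i+1) (by omega)]; exact Nat.zero_le _

lemma flatcat_finite (n : ℕ) : (FlatCat n).Finite := by
  apply Set.Finite.subset (Set.finite_range
    (fun f : Fin n → Fin n => fun i => if h : i < n then (f ⟨i, h⟩ : ℕ) else 0))
  intro w hw
  refine ⟨fun i => ⟨w i, lt_of_le_of_lt (val_le hw i) i.isLt⟩, ?_⟩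
  funext i
  by_cases h : i < n
  · simp [h]
  · simp only [h, dif_neg, not_false_iff]
    exact (hw.1.2.2 i (by omega)).symm

/-- The flattened Catalan words of length `n`, as a finset. -/
noncomputable def FS (n : ℕ) : Finset (ℕ → ℕ) := (flatcat_finite n).toFinset

lemma mem_FS : w ∈ FS n ↔ w ∈ FlatCat n := Set.Finite.mem_toFinset _

noncomputable def TF (n : ℕ) : ℕ := ∑ _w ∈ FS n, 1
noncomputable def TG (n : ℕ) : ℕ := ∑ w ∈ FS n, (w (n-1) - bv n w)
noncomputable def TZ (n : ℕ) : ℕ := ∑ w ∈ FS n, (if bv n w < w (n-1) then 0 else 1)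
noncomputable def TP (n : ℕ) : ℕ := ∑ w ∈ FS n, (if Pend n w then 1 else 0)
noncomputable def TT (n : ℕ) : ℕ := ∑ w ∈ FS n, symValleyCount n w
noncomputable def TU (n : ℕ) : ℕ := ∑ w ∈ FS n, (w (n-1) - bv n w) * symValleyCount n w

lemma runStart_congr {w₁ w₂ : ℕ → ℕ} (h : ∀ i, i < n → w₁ i = w₂ i) {j : ℕ} :
    IsRunStart n w₁ j ↔ IsRunStart n w₂ j := by
  unfold IsRunStart
  constructor <;> rintro ⟨hj, h0⟩ <;> refine ⟨hj, ?_⟩ <;>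
    [rw [← h j hj, ← h (j-1) (by omega)]; rw [h j hj, h (j-1) (by omega)]] <;> exact h0

section Ext

lemma runStart_update_lt {c j : ℕ} (hj : j < n) :
    IsRunStart (n+1) (Function.update w n c) j ↔ IsRunStart n w j := by
  have h1 : Function.update w n c j = w j := Function.update_of_ne (by omega) _ _
  have h2 : Function.update w n c (j-1) = w (j-1) := Function.update_of_ne (by omega) _ _
  unfold IsRunStart
  rw [h1, h2]
  constructor
  · rintro ⟨-, h⟩; exact ⟨hj, h⟩
  · rintro ⟨-, h⟩; exact ⟨by omega, h⟩

lemma runStart_update_top (hn : 1 ≤ n) {c : ℕ} :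
    IsRunStart (n+1) (Function.update w n c) n ↔ c < w (n-1) := by
  have h1 : Function.update w n c n = c := Function.update_self _ _ _
  have h2 : Function.update w n c (n-1) = w (n-1) := Function.update_of_ne (by omega) _ _
  unfold IsRunStart
  rw [h1, h2]
  constructor
  · rintro ⟨-, h | h⟩
    · omega
    · exact h
  · intro h; exact ⟨by omega, Or.inr h⟩

lemma mem_succ_iff (hn : 1 ≤ n) (hw : w ∈ FlatCat n) (c : ℕ) :
    Function.update w n c ∈ FlatCat (n+1) ↔ (bv n w ≤ c ∧ c ≤ w (n-1) + 1) := by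
  constructor
  · rintro ⟨hcat, hflat⟩
    have hcle : c ≤ w (n-1) + 1 := by
      have h := hcat.2.1 (n-1) (by omega)
      rw [show n - 1 + 1 = n by omega, Function.update_self,
        Function.update_of_ne (by omega : n - 1 ≠ n)] at h
      exact h
    refine ⟨?_, hcle⟩
    by_cases hlt : c < w (n-1)
    · have hrs_top : IsRunStart (n+1) (Function.update w n c) n :=
        (runStart_update_top hn).2 hlt
      have hrsJ : IsRunStart (n+1) (Function.update w n c) (Jidx n w) :=
        (runStart_update_lt (by have := Jidx_le (n := n) (w := w); omega)).2 (Jidx_runStart hn)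
      have h := hflat _ _ hrsJ hrs_top (by have := Jidx_le (n := n) (w := w); omega)
      rwa [Function.update_self,
        Function.update_of_ne (by have := Jidx_le (n := n) (w := w); omega : Jidx n w ≠ n)] at h
    · have := bv_le (w := w) hn; omega
  · rintro ⟨hbc, hcle⟩
    refine ⟨⟨?_, ?_, ?_⟩, ?_⟩
    · rw [Function.update_of_ne (by omega : 0 ≠ n)]; exact hw.1.1
    · intro i hi
      by_cases h : i + 1 < n
      · rw [Function.update_of_ne (by omega : i + 1 ≠ n),
          Function.update_of_ne (by omega : i ≠ n)]
        exact hw.1.2.1 i h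
      · have hi1 : i + 1 = n := by omega
        rw [hi1, Function.update_self, Function.update_of_ne (by omega : i ≠ n),
          show i = n - 1 by omega]
        exact hcle
    · intro i hi
      rw [Function.update_of_ne (by omega : i ≠ n)]
      exact hw.1.2.2 i (by omega)
    · intro i j hi hj hij
      by_cases hjn : j < n
      · have hin : i < n := by omega
        rw [runStart_update_lt hin] at hi
        rw [runStart_update_lt hjn] at hj
        rw [Function.update_of_ne (by omega : i ≠ n),
          Function.update_of_ne (by omega : j ≠ n)]
        exact hw.2 i j hi hj hij
      · have hjn' : j = n := by have := hj.1; omega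
        rw [hjn'] at hj hij ⊢
        by_cases hin : i < n
        · rw [runStart_update_lt hin] at hi
          rw [Function.update_of_ne (by omega : i ≠ n), Function.update_self]
          exact (runStart_le_bv hw hi).trans hbc
        · have hin' : i = n := by have := hi.1; omega
          rw [hin']

lemma trunc_mem (hn : 1 ≤ n) {v : ℕ → ℕ} (hv : v ∈ FlatCat (n+1)) :
    Function.update v n 0 ∈ FlatCat n ∧
      bv n (Function.update v n 0) ≤ v n ∧ v n ≤ (Function.update v n 0) (n-1) + 1 := by
  set u := Function.update v n 0 with hu
  have hub : ∀ i, i < n → u i = v i := fun i hi => Function.update_of_ne (by omega) _ _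
  have humem : u ∈ FlatCat n := by
    refine ⟨⟨?_, ?_, ?_⟩, ?_⟩
    · rw [hub 0 (by omega)]; exact hv.1.1
    · intro i hi
      rw [hub i (by omega), hub (i+1) (by omega)]
      exact hv.1.2.1 i (by omega)
    · intro i hi
      rcases Nat.eq_or_lt_of_le hi with h | h
      · rw [hu, ← h]; exact Function.update_self _ _ _
      · rw [hu, Function.update_of_ne (by omega : i ≠ n)]
        exact hv.1.2.2 i (by omega)
    · intro i j hi hj hij
      have hin := hi.1
      have hjn := hj.1
      have hi' : IsRunStart (n+1) v i := by
        rw [runStart_congr (fun k hk => hub k hk)] at hi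
        exact ⟨by omega, hi.2⟩
      have hj' : IsRunStart (n+1) v j := by
        rw [runStart_congr (fun k hk => hub k hk)] at hj
        exact ⟨by omega, hj.2⟩
      rw [hub i hin, hub j hjn]
      exact hv.2 i j hi' hj' hij
  refine ⟨humem, ?_, ?_⟩
  · by_cases hlt : v n < v (n-1)
    · have hrs_top : IsRunStart (n+1) v n := ⟨by omega, Or.inr hlt⟩
      have hrsJ : IsRunStart (n+1) v (Jidx n u) := by
        have h1 := Jidx_runStart (w := u) hn
        have h2 : Jidx n u < n := by have := Jidx_le (n := n) (w := u); omega
        rw [runStart_congr (fun k hk => hub k hk)] at h1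
        exact ⟨by omega, h1.2⟩
      have h := hv.2 _ _ hrsJ hrs_top (by have := Jidx_le (n := n) (w := u); omega)
      rw [← hub _ (by have := Jidx_le (n := n) (w := u); omega)] at h
      exact h
    · have h1 := bv_le (w := u) hn
      rw [hub (n-1) (by omega)] at h1
      omega
  · have h := hv.1.2.1 (n-1) (by omega)
    rw [show n - 1 + 1 = n by omega] at h
    rw [hub (n-1) (by omega)]
    exact h

lemma Jidx_update {c : ℕ} (hn : 1 ≤ n) :
    Jidx (n+1) (Function.update w n c) = if c < w (n-1) then n else Jidx n w := by
  have hJle := Jidx_le (n := n) (w := w)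
  have hub : ∀ i, i < n → Function.update w n c i = w i := fun i _ =>
    Function.update_of_ne (by omega) _ _
  have hun : Function.update w n c n = c := Function.update_self _ _ _
  split_ifs with hlt
  · refine Nat.findGreatest_eq_iff.2 ⟨by omega, fun _ => ?_, fun k hk1 hk2 => by omega⟩
    show Function.update w n c n < Function.update w n c (n - 1)
    rw [hun, hub (n-1) (by omega)]
    exact hlt
  · refine Nat.findGreatest_eq_iff.2 ⟨by omega, ?_, ?_⟩
    · intro hne
      have h0 : 0 < Jidx n w := Nat.pos_of_ne_zero hne
      have hs := Jidx_spec h0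
      show Function.update w n c (Jidx n w) < Function.update w n c (Jidx n w - 1)
      rw [hub _ (by omega), hub _ (by omega)]
      exact hs
    · intro k hk1 hk2
      show ¬ Function.update w n c k < Function.update w n c (k - 1)
      rcases Nat.eq_or_lt_of_le hk2 with h | h
      · rw [h, Nat.add_sub_cancel, hun, hub (n-1) (by omega)]
        exact hlt
      · rw [hub k (by omega), hub (k-1) (by omega)]
        exact Jidx_greatest (n := n) hk1 (by omega)

lemma bv_update {c : ℕ} (hn : 1 ≤ n) :
    bv (n+1) (Function.update w n c) = if c < w (n-1) then c else bv n w := by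
  have hJle := Jidx_le (n := n) (w := w)
  unfold bv
  by_cases hlt : c < w (n-1)
  · rw [Jidx_update hn, if_pos hlt, if_pos hlt, Function.update_self]
  · rw [Jidx_update hn, if_neg hlt, if_neg hlt,
      Function.update_of_ne (show Jidx n w ≠ n by omega)]

lemma pend_update_lt {c : ℕ} (hn : 1 ≤ n) (hlt : c < w (n-1)) :
    Pend (n+1) (Function.update w n c) ↔ c + 1 = w (n-1) := by
  unfold Pend
  rw [Jidx_update hn, if_pos hlt, Nat.add_sub_cancel, Function.update_self,
    Function.update_of_ne (by omega : n - 1 ≠ n)]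
  constructor
  · rintro ⟨-, h, -⟩; omega
  · intro h; exact ⟨by omega, by omega, rfl⟩

lemma pend_update_eq (hn : 1 ≤ n) :
    Pend (n+1) (Function.update w n (w (n-1))) ↔ Pend n w := by
  have hJle := Jidx_le (n := n) (w := w)
  unfold Pend
  rw [Jidx_update hn, if_neg (by omega), Nat.add_sub_cancel, Function.update_self,
    Function.update_of_ne (by omega : Jidx n w ≠ n),
    Function.update_of_ne (by omega : Jidx n w - 1 ≠ n)]

lemma pend_update_succ (hn : 1 ≤ n) :
    ¬ Pend (n+1) (Function.update w n (w (n-1) + 1)) := by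
  have hJle := Jidx_le (n := n) (w := w)
  have hble := bv_le (w := w) hn
  unfold Pend
  rw [Jidx_update hn, if_neg (by omega), Nat.add_sub_cancel, Function.update_self,
    Function.update_of_ne (by omega : Jidx n w ≠ n)]
  rintro ⟨-, -, h⟩
  unfold bv at hble
  omega

lemma symset_finite (n : ℕ) (w : ℕ → ℕ) :
    {p : ℕ × ℕ | 1 ≤ p.2 ∧ IsSymValley n w p.2 p.1}.Finite := by
  apply Set.Finite.subset ((Set.finite_Iio n).prod (Set.finite_Iio n))
  rintro ⟨i, l⟩ ⟨h1, h2⟩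
  have h3 := h2.1
  exact ⟨Set.mem_Iio.2 (by omega), Set.mem_Iio.2 (by omega)⟩

lemma pend_const (hp : Pend n w) {i : ℕ} (h1 : Jidx n w ≤ i) (h2 : i ≤ n - 1) :
    w i = w (Jidx n w) := by
  have ha : w i ≤ w (n-1) := mono_after_Jidx h1 h2 le_rfl
  have hb : w (Jidx n w) ≤ w i := mono_after_Jidx le_rfl h1 h2
  have hc := hp.2.2
  omega

lemma symValley_update_old {c ℓ i : ℕ} (h : IsSymValley n w ℓ i) :
    IsSymValley (n+1) (Function.update w n c) ℓ i := by
  obtain ⟨h1, h2, h3, h4⟩ := h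
  have hub : ∀ k, k < n → Function.update w n c k = w k := fun k _ =>
    Function.update_of_ne (by omega) _ _
  refine ⟨by omega, ?_, ?_, ?_⟩
  · rw [hub i (by omega), hub (i+1) (by omega)]; exact h2
  · intro t ht1 ht2
    rw [hub (i+t) (by omega), hub (i+1) (by omega)]
    exact h3 t ht1 ht2
  · rw [hub (i+ℓ+1) (by omega), hub i (by omega)]; exact h4

lemma symValley_update_new (hn : 1 ≤ n) (hp : Pend n w) :
    IsSymValley (n+1) (Function.update w n (w (n-1) + 1)) (n - Jidx n w) (Jidx n w - 1) ∧
      1 ≤ n - Jidx n w := by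
  obtain ⟨hJ0, hJd, hJe⟩ := hp
  have hJle := Jidx_le (n := n) (w := w)
  have hub : ∀ k, k < n → Function.update w n (w (n-1) + 1) k = w k := fun k _ =>
    Function.update_of_ne (by omega) _ _
  have hm1 : 1 ≤ n - Jidx n w := by omega
  refine ⟨⟨by omega, ?_, ?_, ?_⟩, hm1⟩
  · rw [show Jidx n w - 1 + 1 = Jidx n w by omega, hub (Jidx n w - 1) (by omega),
      hub (Jidx n w) (by omega)]
    exact hJd
  · intro t ht1 ht2
    rw [show Jidx n w - 1 + 1 = Jidx n w by omega, hub (Jidx n w - 1 + t) (by omega),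
      hub (Jidx n w) (by omega)]
    exact pend_const ⟨hJ0, hJd, hJe⟩ (by omega) (by omega)
  · rw [show Jidx n w - 1 + (n - Jidx n w) + 1 = n by omega, Function.update_self,
      hub (Jidx n w - 1) (by omega), hJd, hJe]

lemma symValley_update_classify {c ℓ i : ℕ} (hn : 1 ≤ n) (h1 : 1 ≤ ℓ)
    (h : IsSymValley (n+1) (Function.update w n c) ℓ i) :
    IsSymValley n w ℓ i ∨
      (c = w (n-1) + 1 ∧ Pend n w ∧ i = Jidx n w - 1 ∧ ℓ = n - Jidx n w) := by
  obtain ⟨hlt, hd, hc3, hc4⟩ := h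
  have hub : ∀ k, k < n → Function.update w n c k = w k := fun k _ =>
    Function.update_of_ne (by omega) _ _
  by_cases hcase : i + ℓ + 1 < n
  · left
    refine ⟨hcase, ?_, ?_, ?_⟩
    · rw [hub i (by omega), hub (i+1) (by omega)] at hd; exact hd
    · intro t ht1 ht2
      have h5 := hc3 t ht1 ht2
      rw [hub (i+t) (by omega), hub (i+1) (by omega)] at h5
      exact h5
    · rw [hub (i+ℓ+1) (by omega), hub i (by omega)] at hc4; exact hc4
  · right
    have hieq : i + ℓ + 1 = n := by omega
    have hi1 : i + 1 < n := by omega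
    have hdw : w i = w (i+1) + 1 := by
      rw [hub i (by omega), hub (i+1) hi1] at hd; exact hd
    have hconst : ∀ t, 1 ≤ t → t ≤ ℓ → w (i + t) = w (i+1) := by
      intro t ht1 ht2
      have h5 := hc3 t ht1 ht2
      rw [hub (i+t) (by omega), hub (i+1) hi1] at h5
      exact h5
    have hv : w (n-1) = w (i+1) := by
      have h5 := hconst ℓ h1 le_rfl
      rw [show i + ℓ = n - 1 by omega] at h5
      exact h5
    have hcval : c = w i := by
      have h5 := hc4
      rw [show i + ℓ + 1 = n by omega, Function.update_self, hub i (by omega)] at h5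
      exact h5
    have hle1 : i + 1 ≤ Jidx n w := by
      apply le_Jidx (by omega)
      rw [show i + 1 - 1 = i by omega]
      omega
    have hge1 : Jidx n w ≤ i + 1 := by
      by_contra hgt
      push_neg at hgt
      have hJle := Jidx_le (n := n) (w := w)
      have hspec := Jidx_spec (n := n) (w := w) (by omega)
      have e1 : w (Jidx n w) = w (i+1) := by
        have h5 := hconst (Jidx n w - i) (by omega) (by omega)
        rw [show i + (Jidx n w - i) = Jidx n w by omega] at h5; exact h5
      have e2 : w (Jidx n w - 1) = w (i+1) := by
        have h5 := hconst (Jidx n w - 1 - i) (by omega) (by omega)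
        rw [show i + (Jidx n w - 1 - i) = Jidx n w - 1 by omega] at h5; exact h5
      omega
    have hm : Jidx n w = i + 1 := by omega
    refine ⟨by omega, ⟨by omega, ?_, ?_⟩, by omega, by omega⟩
    · rw [hm, show i + 1 - 1 = i by omega]
      omega
    · rw [hm]
      omega

lemma sv_update_no {c : ℕ} (hn : 1 ≤ n)
    (h : c ≠ w (n-1) + 1 ∨ ¬ Pend n w) :
    symValleyCount (n+1) (Function.update w n c) = symValleyCount n w := by
  unfold symValleyCount
  have hset : {p : ℕ × ℕ | 1 ≤ p.2 ∧ IsSymValley (n+1) (Function.update w n c) p.2 p.1} =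
      {p : ℕ × ℕ | 1 ≤ p.2 ∧ IsSymValley n w p.2 p.1} := by
    ext ⟨i, l⟩
    simp only [Set.mem_setOf_eq]
    constructor
    · rintro ⟨hl, hsv⟩
      rcases symValley_update_classify hn hl hsv with hold | ⟨hcv, hp, -, -⟩
      · exact ⟨hl, hold⟩
      · rcases h with h | h
        · exact absurd hcv h
        · exact absurd hp h
    · rintro ⟨hl, hsv⟩
      exact ⟨hl, symValley_update_old hsv⟩
  rw [hset]

lemma sv_update_yes (hn : 1 ≤ n) (hp : Pend n w) :
    symValleyCount (n+1) (Function.update w n (w (n-1) + 1)) = symValleyCount n w + 1 := by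
  unfold symValleyCount
  obtain ⟨hnew, hl1⟩ := symValley_update_new hn hp
  have hJ0 := hp.1
  have hset : {p : ℕ × ℕ | 1 ≤ p.2 ∧ IsSymValley (n+1) (Function.update w n (w (n-1) + 1)) p.2 p.1} =
      insert (Jidx n w - 1, n - Jidx n w)
        {p : ℕ × ℕ | 1 ≤ p.2 ∧ IsSymValley n w p.2 p.1} := by
    ext ⟨i, l⟩
    simp only [Set.mem_setOf_eq, Set.mem_insert_iff, Prod.mk.injEq]
    constructor
    · rintro ⟨hl, hsv⟩
      rcases symValley_update_classify hn hl hsv with hold | ⟨-, -, hi, hll⟩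
      · exact Or.inr ⟨hl, hold⟩
      · exact Or.inl ⟨hi, hll⟩
    · rintro (⟨rfl, rfl⟩ | ⟨hl, hsv⟩)
      · exact ⟨hl1, hnew⟩
      · exact ⟨hl, symValley_update_old hsv⟩
  rw [hset]
  rw [Set.ncard_insert_of_notMem ?_ (symset_finite n w)]
  rintro ⟨-, hsv⟩
  have h5 := hsv.1
  have hJle := Jidx_le (n := n) (w := w)
  omega

lemma pend_imp_eq (hp : Pend n w) : w (n-1) = bv n w := hp.2.2

end Ext

lemma zero_at_n (hw : w ∈ FlatCat n) : w n = 0 := hw.1.2.2 n le_rfl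

lemma sum_succ {n : ℕ} (hn : 1 ≤ n) (g : (ℕ → ℕ) → ℕ) :
    ∑ w' ∈ FS (n+1), g w' =
      ∑ w ∈ FS n, ∑ c ∈ Finset.Icc (bv n w) (w (n-1) + 1), g (Function.update w n c) := by
  rw [← Finset.sum_sigma (FS n) (fun w => Finset.Icc (bv n w) (w (n-1) + 1))
      (fun p => g (Function.update p.1 n p.2))]
  refine Finset.sum_bij'
    (i := fun (v : ℕ → ℕ) (_ : v ∈ FS (n+1)) =>
      (⟨Function.update v n 0, v n⟩ : Σ _ : ℕ → ℕ, ℕ))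
    (j := fun p _ => Function.update p.1 n p.2) ?_ ?_ ?_ ?_ ?_
  · intro v hv
    rw [mem_FS] at hv
    obtain ⟨h1, h2, h3⟩ := trunc_mem hn hv
    rw [Finset.mem_sigma, mem_FS]
    exact ⟨h1, Finset.mem_Icc.2 ⟨h2, h3⟩⟩
  · intro p hp
    rw [Finset.mem_sigma, mem_FS] at hp
    obtain ⟨h1, h2⟩ := hp
    rw [Finset.mem_Icc] at h2
    rw [mem_FS]
    exact (mem_succ_iff hn h1 p.2).2 ⟨h2.1, h2.2⟩
  · intro v hv
    simp only
    rw [Function.update_idem, Function.update_eq_self]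
  · intro p hp
    rw [Finset.mem_sigma, mem_FS] at hp
    obtain ⟨w, c⟩ := p
    have h1 : Function.update (Function.update w n c) n 0 = w := by
      rw [Function.update_idem, ← zero_at_n hp.1, Function.update_eq_self]
    have h2 : Function.update w n c n = c := Function.update_self _ _ _
    show (⟨Function.update (Function.update w n c) n 0, Function.update w n c n⟩ :
      Σ _ : ℕ → ℕ, ℕ) = ⟨w, c⟩
    rw [h1, h2]
  · intro v hv
    simp only
    rw [Function.update_idem, Function.update_eq_self]

lemma Icc_sum_split {b v : ℕ} (hbv : b ≤ v) (f : ℕ → ℕ) :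
    ∑ c ∈ Finset.Icc b (v+1), f c = (∑ c ∈ Finset.Ico b v, f c) + f v + f (v+1) := by
  rw [← Finset.Ico_add_one_right_eq_Icc, Finset.sum_Ico_succ_top (by omega), Finset.sum_Ico_succ_top (by omega)]

lemma recF {n : ℕ} (hn : 1 ≤ n) : TF (n+1) = TG n + (TF n + TF n) := by
  unfold TF TG
  rw [sum_succ hn (fun _ => 1), ← Finset.sum_add_distrib, ← Finset.sum_add_distrib]
  refine Finset.sum_congr rfl fun w _ => ?_
  have hbv := bv_le (n := n) (w := w) hn
  rw [Finset.sum_const, smul_eq_mul, mul_one, Nat.card_Icc]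
  omega

lemma recG {n : ℕ} (hn : 1 ≤ n) : TG (n+1) = TF n + (TG n + TG n) := by
  unfold TG TF
  rw [sum_succ hn (fun u => u (n+1-1) - bv (n+1) u),
    ← Finset.sum_add_distrib, ← Finset.sum_add_distrib]
  refine Finset.sum_congr rfl fun w _ => ?_
  have hbv := bv_le (n := n) (w := w) hn
  rw [Icc_sum_split hbv]
  have hIco : ∀ c ∈ Finset.Ico (bv n w) (w (n-1)),
      Function.update w n c (n+1-1) - bv (n+1) (Function.update w n c) = 0 := by
    intro c hc
    rw [Finset.mem_Ico] at hc
    rw [Nat.add_sub_cancel, Function.update_self, bv_update hn, if_pos hc.2]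
    omega
  rw [Finset.sum_congr rfl hIco, Finset.sum_const_zero]
  rw [Nat.add_sub_cancel, Function.update_self, Function.update_self,
    bv_update hn, bv_update hn, if_neg (by omega), if_neg (by omega)]
  omega

lemma recZ {n : ℕ} (hn : 1 ≤ n) : TZ (n+1) = TG n + TZ n := by
  unfold TZ TG
  rw [sum_succ hn (fun u => if bv (n+1) u < u (n+1-1) then 0 else 1),
    ← Finset.sum_add_distrib]
  refine Finset.sum_congr rfl fun w _ => ?_
  have hbv := bv_le (n := n) (w := w) hn
  rw [Icc_sum_split hbv]
  have hIco : ∀ c ∈ Finset.Ico (bv n w) (w (n-1)),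
      (if bv (n+1) (Function.update w n c) < Function.update w n c (n+1-1) then 0 else 1) = 1 := by
    intro c hc
    rw [Finset.mem_Ico] at hc
    rw [Nat.add_sub_cancel, Function.update_self, bv_update hn, if_pos hc.2, if_neg (by omega)]
  rw [Finset.sum_congr rfl hIco, Finset.sum_const, smul_eq_mul, mul_one, Nat.card_Ico]
  have e1 : bv (n+1) (Function.update w n (w (n-1))) = bv n w := by
    rw [bv_update hn, if_neg (show ¬ w (n-1) < w (n-1) by omega)]
  have e2 : bv (n+1) (Function.update w n (w (n-1) + 1)) = bv n w := by
    rw [bv_update hn, if_neg (show ¬ w (n-1) + 1 < w (n-1) by omega)]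
  rw [Nat.add_sub_cancel, Function.update_self, Function.update_self, e1, e2,
    if_pos (show bv n w < w (n-1) + 1 by omega)]
  split_ifs <;> omega

lemma recP {n : ℕ} (hn : 1 ≤ n) : TP (n+1) + TZ n = TP n + TF n := by
  unfold TP TZ TF
  rw [sum_succ hn (fun u => if Pend (n+1) u then 1 else 0),
    ← Finset.sum_add_distrib, ← Finset.sum_add_distrib]
  refine Finset.sum_congr rfl fun w _ => ?_
  have hbv := bv_le (n := n) (w := w) hn
  rw [Icc_sum_split hbv]
  have hIco : ∀ c ∈ Finset.Ico (bv n w) (w (n-1)),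
      (if Pend (n+1) (Function.update w n c) then (1:ℕ) else 0)
        = if c = w (n-1) - 1 then 1 else 0 := by
    intro c hc
    rw [Finset.mem_Ico] at hc
    simp only [pend_update_lt hn hc.2]
    split_ifs <;> omega
  have h1 : (∑ c ∈ Finset.Ico (bv n w) (w (n-1)),
      if Pend (n+1) (Function.update w n c) then (1:ℕ) else 0)
        = if bv n w < w (n-1) then 1 else 0 := by
    rw [Finset.sum_congr rfl hIco]
    by_cases hbv2 : bv n w < w (n-1)
    · rw [Finset.sum_eq_single_of_mem (w (n-1) - 1)
        (Finset.mem_Ico.2 ⟨by omega, by omega⟩) (fun x _ hne => if_neg hne),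
        if_pos (by omega), if_pos hbv2]
    · rw [Finset.Ico_eq_empty (by omega), Finset.sum_empty, if_neg hbv2]
  have h2 : (if Pend (n+1) (Function.update w n (w (n-1))) then (1:ℕ) else 0)
      = if Pend n w then 1 else 0 := by
    simp only [pend_update_eq hn]
  have h3 : (if Pend (n+1) (Function.update w n (w (n-1) + 1)) then (1:ℕ) else 0) = 0 :=
    if_neg (pend_update_succ hn)
  rw [h1, h2, h3]
  split_ifs <;> omega

lemma recT {n : ℕ} (hn : 1 ≤ n) : TT (n+1) = TU n + (TT n + TT n) + TP n := by
  unfold TT TU TP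
  rw [sum_succ hn (fun u => symValleyCount (n+1) u),
    ← Finset.sum_add_distrib, ← Finset.sum_add_distrib, ← Finset.sum_add_distrib]
  refine Finset.sum_congr rfl fun w _ => ?_
  have hbv := bv_le (n := n) (w := w) hn
  rw [Icc_sum_split hbv]
  have hIco : ∀ c ∈ Finset.Ico (bv n w) (w (n-1)),
      symValleyCount (n+1) (Function.update w n c) = symValleyCount n w := by
    intro c hc
    rw [Finset.mem_Ico] at hc
    exact sv_update_no hn (Or.inl (by omega))
  rw [Finset.sum_congr rfl hIco, Finset.sum_const, smul_eq_mul, Nat.card_Ico,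
    sv_update_no hn (Or.inl (by omega))]
  by_cases hp : Pend n w
  · rw [sv_update_yes hn hp, if_pos hp]
    ring
  · rw [sv_update_no hn (Or.inr hp), if_neg hp]
    ring

lemma recU {n : ℕ} (hn : 1 ≤ n) : TU (n+1) = (TU n + TU n) + TT n + TP n := by
  unfold TU TT TP
  rw [sum_succ hn (fun u => (u (n+1-1) - bv (n+1) u) * symValleyCount (n+1) u),
    ← Finset.sum_add_distrib, ← Finset.sum_add_distrib, ← Finset.sum_add_distrib]
  refine Finset.sum_congr rfl fun w _ => ?_
  have hbv := bv_le (n := n) (w := w) hn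
  rw [Icc_sum_split hbv]
  have hIco : ∀ c ∈ Finset.Ico (bv n w) (w (n-1)),
      (Function.update w n c (n+1-1) - bv (n+1) (Function.update w n c))
        * symValleyCount (n+1) (Function.update w n c) = 0 := by
    intro c hc
    rw [Finset.mem_Ico] at hc
    rw [Nat.add_sub_cancel, Function.update_self, bv_update hn, if_pos hc.2,
      Nat.sub_self, zero_mul]
  rw [Finset.sum_congr rfl hIco, Finset.sum_const_zero]
  have e1 : bv (n+1) (Function.update w n (w (n-1))) = bv n w := by
    rw [bv_update hn, if_neg (show ¬ w (n-1) < w (n-1) by omega)]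
  have e2 : bv (n+1) (Function.update w n (w (n-1) + 1)) = bv n w := by
    rw [bv_update hn, if_neg (show ¬ w (n-1) + 1 < w (n-1) by omega)]
  rw [Nat.add_sub_cancel, Function.update_self, Function.update_self, e1, e2,
    sv_update_no hn (Or.inl (by omega))]
  by_cases hp : Pend n w
  · have hbq : w (n-1) = bv n w := pend_imp_eq hp
    rw [sv_update_yes hn hp, if_pos hp,
      show w (n-1) + 1 - bv n w = 1 by omega, show w (n-1) - bv n w = 0 by omega]
    ring
  · rw [sv_update_no hn (Or.inr hp), if_neg hp,
      show w (n-1) + 1 - bv n w = (w (n-1) - bv n w) + 1 by omega]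
    ring

lemma FS_one : FS 1 = {fun _ => 0} := by
  ext w
  rw [mem_FS, Finset.mem_singleton]
  constructor
  · intro hw
    funext i
    cases i with
    | zero => exact hw.1.1
    | succ i => exact hw.1.2.2 _ (by omega)
  · rintro rfl
    exact ⟨⟨rfl, fun i hi => by omega, fun i _ => rfl⟩, fun i j _ _ _ => le_rfl⟩

lemma symValleyCount_one (w : ℕ → ℕ) : symValleyCount 1 w = 0 := by
  unfold symValleyCount
  convert Set.ncard_empty (ℕ × ℕ) using 2
  ext ⟨i, l⟩
  simp only [Set.mem_setOf_eq, Set.mem_empty_iff_false, iff_false, not_and]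
  rintro - ⟨h, -, -⟩
  omega

lemma TF_one : TF 1 = 1 := by simp [TF, FS_one]
lemma TG_one : TG 1 = 0 := by simp [TG, FS_one, bv, Jidx]
lemma TZ_one : TZ 1 = 1 := by simp [TZ, FS_one, bv, Jidx]
lemma TP_one : TP 1 = 0 := by simp [TP, FS_one, Pend, Jidx]
lemma TT_one : TT 1 = 0 := by simp [TT, FS_one, symValleyCount_one]
lemma TU_one : TU 1 = 0 := by simp [TU, FS_one, symValleyCount_one]

lemma closed_forms (m : ℕ) :
    (TF (m+1) : ℚ) = (3^m + 1)/2 ∧ (TG (m+1) : ℚ) = (3^m - 1)/2 ∧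
    (TZ (m+1) : ℚ) = (3^m + 3 - 2*m)/4 ∧
    (TP (m+1) : ℚ) = (3^m + 2*(m:ℚ)^2 - 4*m - 1)/8 ∧
    (TT (m+1) : ℚ) = (3^(m+1)*(2*(m:ℚ)-3) - 18*(m:ℚ)^2 + 18*m + 9)/144 ∧
    (TU (m+1) : ℚ) = (3^(m+1)*(2*(m:ℚ)-3) - 18*(m:ℚ)^2 + 18*m + 9)/144 := by
  induction m with
  | zero =>
    rw [TF_one, TG_one, TZ_one, TP_one, TT_one, TU_one]
    norm_num
  | succ m ih =>
    obtain ⟨hF, hG, hZ, hP, hT, hU⟩ := ih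
    have hn : 1 ≤ m + 1 := by omega
    have rF := recF hn
    have rG := recG hn
    have rZ := recZ hn
    have rP := recP hn
    have rT := recT hn
    have rU := recU hn
    have qF : (TF (m+1+1) : ℚ) = TG (m+1) + (TF (m+1) + TF (m+1)) := by exact_mod_cast rF
    have qG : (TG (m+1+1) : ℚ) = TF (m+1) + (TG (m+1) + TG (m+1)) := by exact_mod_cast rG
    have qZ : (TZ (m+1+1) : ℚ) = TG (m+1) + TZ (m+1) := by exact_mod_cast rZ
    have qP : (TP (m+1+1) : ℚ) + TZ (m+1) = TP (m+1) + TF (m+1) := by exact_mod_cast rP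
    have qT : (TT (m+1+1) : ℚ) = TU (m+1) + (TT (m+1) + TT (m+1)) + TP (m+1) := by
      exact_mod_cast rT
    have qU : (TU (m+1+1) : ℚ) = (TU (m+1) + TU (m+1)) + TT (m+1) + TP (m+1) := by
      exact_mod_cast rU
    refine ⟨?_, ?_, ?_, ?_, ?_, ?_⟩
    · rw [qF, hG, hF]; push_cast; ring
    · rw [qG, hF, hG]; push_cast; ring
    · rw [qZ, hG, hZ]; push_cast; ring
    · have h5 : (TP (m+1+1) : ℚ) = (TP (m+1) : ℚ) + TF (m+1) - TZ (m+1) := by linarith [qP]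
      rw [h5, hP, hF, hZ]; push_cast; ring
    · rw [qT, hU, hT, hP]; push_cast; ring
    · rw [qU, hU, hT, hP]; push_cast; ring

lemma TT_formula (n : ℕ) (hn : 1 ≤ n) :
    (TT n : ℚ) = (3 ^ n * (2 * (n : ℚ) - 5) - 18 * (n : ℚ) ^ 2 + 54 * (n : ℚ) - 27) / 144 := by
  obtain ⟨m, rfl⟩ : ∃ m, n = m + 1 := ⟨n - 1, by omega⟩
  rw [(closed_forms m).2.2.2.2.1]
  push_cast
  ring

end SVAux


/-- For every `n ≥ 4`, the total number of symmetric valleys over all flattened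
Catalan words of length `n` equals `(3^n·(2n - 5) - 18n² + 54n - 27)/144`. -/
theorem flatCat_total_symValleys (n : ℕ) (hn : 4 ≤ n) :
    ((∑ᶠ w ∈ FlatCat n, symValleyCount n w : ℕ) : ℚ) =
      (3 ^ n * (2 * (n : ℚ) - 5) - 18 * (n : ℚ) ^ 2 + 54 * (n : ℚ) - 27) / 144 := by
  have h1 : ∑ᶠ w ∈ FlatCat n, symValleyCount n w = SVAux.TT n := by
    rw [finsum_mem_eq_finite_toFinset_sum _ (SVAux.flatcat_finite n)]
    rfl
  rw [h1]
  exact SVAux.TT_formula n (by omega)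
end
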